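/- arXiv:1810.11638 — 11 statements merged into one kernel-verified Lean document; each statement's English description precedes it below -/
import Mathlib

section
/- Let R be a ring and M a class of right R-modules. If Z is a left R-module with Tor₁^R(M, Z) = 0 for all M in the class, and Y is a pure submodule of Z, then Tor₁^R(M, Y) = 0 for all M in the class. That is, the class of E_T^M-flat left R-modules is closed under pure submodules. -/
/-!
Take a free presentation `0 → S → F → M → 0`. Tensoring it with a projective resolution `P` of
`N` gives a short exact sequence of complexes, since each `Pᵢ` is flat, and `H₁(F ⊗ P) = 0`
since `F` is flat; its homology sequence identifies the vanishing of `Tor₁(M, N)` with the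
injectivity of `S ⊗ N → F ⊗ N`. For `Y ≤ Z` pure, the map `S ⊗ Y → F ⊗ Y → F ⊗ Z` equals
`S ⊗ Y → S ⊗ Z → F ⊗ Z`, a composite of two injections, so `S ⊗ Y → F ⊗ Y` is injective.
-/

open CategoryTheory

/-- `Tor₁^R(M, N)`. -/
noncomputable abbrev tor1 {R : Type} [CommRing R] (M N : ModuleCat.{0} R) : ModuleCat R :=
  ((Tor (ModuleCat.{0} R) 1).obj M).obj N

open Limits MonoidalCategory

theorem LinearMap.rTensor_injective_of_lTensor_injective {R M N P Q : Type*} [CommSemiring R]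
    [AddCommMonoid M] [Module R M] [AddCommMonoid N] [Module R N]
    [AddCommMonoid P] [Module R P] [AddCommMonoid Q] [Module R Q]
    (f : M →ₗ[R] N) (g : P →ₗ[R] Q) (hg : Function.Injective (g.lTensor M))
    (hf : Function.Injective (f.rTensor Q)) : Function.Injective (f.rTensor P) := by
  have hcomm : g.lTensor N ∘ f.rTensor P = f.rTensor Q ∘ g.lTensor M := by
    rw [← LinearMap.coe_comp, ← LinearMap.coe_comp, LinearMap.lTensor_comp_rTensor,
      LinearMap.rTensor_comp_lTensor]
  exact Function.Injective.of_comp (f := g.lTensor N) (hcomm ▸ hf.comp hg)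

lemma CategoryTheory.ProjectiveResolution.fromLeftDerivedZero'_naturality_functor
    {C D : Type*} [Category C] [Category D] [Abelian C] [Abelian D] {X : C}
    (P : ProjectiveResolution X) {F G : C ⥤ D} [F.Additive] [G.Additive] (τ : F ⟶ G) :
    HomologicalComplex.opcyclesMap ((NatTrans.mapHomologicalComplex τ _).app P.complex) 0 ≫
      P.fromLeftDerivedZero' G = P.fromLeftDerivedZero' F ≫ τ.app X := by
  rw [← cancel_epi (HomologicalComplex.pOpcycles _ 0), HomologicalComplex.p_opcyclesMap_assoc,
    ProjectiveResolution.pOpcycles_comp_fromLeftDerivedZero',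
    ProjectiveResolution.pOpcycles_comp_fromLeftDerivedZero'_assoc]
  exact (τ.naturality _).symm

lemma CategoryTheory.ShortComplex.ShortExact.isZero_homology₃_iff_mono_homologyMap
    {C : Type*} [Category C] [Abelian C] {ι : Type*} {c : ComplexShape ι}
    {S : ShortComplex (HomologicalComplex C c)} (hS : S.ShortExact) {i j : ι} (hij : c.Rel i j)
    (h₂ : IsZero (S.X₂.homology i)) :
    IsZero (S.X₃.homology i) ↔ Mono (HomologicalComplex.homologyMap S.f j) := by
  have : Mono (hS.δ i j hij) := (hS.homology_exact₃ i j hij).mono_g (h₂.eq_of_src _ _)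
  refine ⟨fun h₃ => (hS.homology_exact₁ i j hij).mono_g (h₃.eq_of_src _ _), fun _ => ?_⟩
  exact IsZero.of_mono_eq_zero _ (zero_of_comp_mono _ (hS.δ_comp i j hij))

namespace HomologicalComplex

section DegreewiseTensorRight

variable {C : Type*} [Category C] [Abelian C] [MonoidalCategory C] [MonoidalPreadditive C]
  {ι : Type*} {c : ComplexShape ι}

-- Reducible, so that its objects unify with the complexes `(X ⊗ -).mapHomologicalComplex` that
-- appear in `Functor.leftDerived` and `ProjectiveResolution.fromLeftDerivedZero'`.
abbrev degreewiseTensorRight (K : HomologicalComplex C c) : C ⥤ HomologicalComplex C c where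
  obj X := (((tensoringLeft C).obj X).mapHomologicalComplex c).obj K
  map f := (NatTrans.mapHomologicalComplex ((tensoringLeft C).map f) c).app K

instance (K : HomologicalComplex C c) : (degreewiseTensorRight K).Additive where
  map_add := by intros; ext; exact MonoidalPreadditive.add_whiskerRight _ _

end DegreewiseTensorRight

section ModuleCat

universe u

variable {R : Type u} [CommRing R]

lemma shortExact_map_degreewiseTensorRight {S : ShortComplex (ModuleCat.{u} R)} (hS : S.ShortExact)
    {ι : Type*} {c : ComplexShape ι} (K : HomologicalComplex (ModuleCat.{u} R) c)
    [∀ i, Module.Flat R (K.X i)] : (S.map (degreewiseTensorRight K)).ShortExact :=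
  shortExact_of_degreewise_shortExact _ fun i => hS.map_of_exact (tensorRight (K.X i))

lemma exactAt_degreewiseTensorRight_obj (F : ModuleCat.{u} R) [Module.Flat R F]
    (K : ChainComplex (ModuleCat.{u} R) ℕ) (i : ℕ) (hK : K.ExactAt (i + 1)) :
    ((degreewiseTensorRight K).obj F).ExactAt (i + 1) := by
  rw [exactAt_iff' _ (i + 2) (i + 1) i (by simp) (by simp),
    ShortComplex.ShortExact.moduleCat_exact_iff_function_exact] at hK ⊢
  exact Module.Flat.lTensor_exact F hK

lemma mono_homologyMap_zero_degreewiseTensorRight_map_iff {N : ModuleCat.{u} R}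
    (P : ProjectiveResolution N) {X Y : ModuleCat.{u} R} (f : X ⟶ Y) :
    Mono (homologyMap ((degreewiseTensorRight P.complex).map f) 0) ↔
      Function.Injective (f.hom.rTensor N) := by
  -- `H₀(X ⊗ P) ≅ X ⊗ N` since `X ⊗ -` is right exact.
  let e (X : ModuleCat.{u} R) : _ ≅ X ⊗ N :=
    ChainComplex.isoHomologyι₀ _ ≪≫ asIso (P.fromLeftDerivedZero' (tensorLeft X))
  have hsq : homologyMap ((degreewiseTensorRight P.complex).map f) 0 ≫ (e Y).hom =
      (e X).hom ≫ f ▷ N := by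
    change _ ≫ homologyι _ 0 ≫ _ = (homologyι _ 0 ≫ _) ≫ _
    rw [homologyι_naturality_assoc, Category.assoc]
    exact congrArg _ (P.fromLeftDerivedZero'_naturality_functor ((tensoringLeft _).map f))
  exact ((MorphismProperty.monomorphisms _).arrow_mk_iso_iff
    (Arrow.isoMk (e X) (e Y) hsq.symm)).trans (ModuleCat.mono_iff_injective (f ▷ N))

end ModuleCat

end HomologicalComplex

open HomologicalComplex in
theorem subsingleton_tor_one_iff_injective_rTensor {R : Type*} [CommRing R]
    {S : ShortComplex (ModuleCat R)} (hS : S.ShortExact) [Module.Flat R S.X₂] (N : ModuleCat R) :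
    Subsingleton (((Tor (ModuleCat R) 1).obj S.X₃).obj N) ↔
      Function.Injective (S.f.hom.rTensor N) := by
  let P := projectiveResolution N
  have hX₂ : IsZero (((degreewiseTensorRight P.complex).obj S.X₂).homology 1) :=
    (exactAt_degreewiseTensorRight_obj S.X₂ P.complex 0 (P.complex_exactAt_succ 0)).isZero_homology
  rw [← ModuleCat.isZero_iff_subsingleton,
    ← mono_homologyMap_zero_degreewiseTensorRight_map_iff P]
  exact (P.isoLeftDerivedObj _ 1).isZero_iff.trans
    ((shortExact_map_degreewiseTensorRight hS P.complex).isZero_homology₃_iff_mono_homologyMap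
      (by simp) hX₂)

theorem stmt2 (R : Type) [CommRing R] (𝓜 : ModuleCat.{0} R → Prop)
    (Z : Type) [AddCommGroup Z] [Module R Z]
    (hZ : ∀ M : ModuleCat.{0} R, 𝓜 M → Subsingleton (tor1 M (ModuleCat.of R Z)))
    (Y : Submodule R Z)
    (hpure : ∀ (N : Type) [AddCommGroup N] [Module R N],
      Function.Injective (LinearMap.lTensor N Y.subtype)) :
    ∀ M : ModuleCat.{0} R, 𝓜 M → Subsingleton (tor1 M (ModuleCat.of R Y)) := by
  intro M hM
  have hS := LinearMap.shortExact_shortComplexKer (Finsupp.linearCombination_id_surjective R M)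
  have hZ' := (subsingleton_tor_one_iff_injective_rTensor hS (ModuleCat.of R Z)).1 (hZ M hM)
  exact (subsingleton_tor_one_iff_injective_rTensor hS (ModuleCat.of R Y)).2
    (LinearMap.rTensor_injective_of_lTensor_injective _ _ (hpure _) hZ')
end

section
/- Let R be a ring and M a finitely generated right R-module. Then M is FP-projective if and only if M is finitely presented. -/
/-!
Finitely presented modules are FP-projective straight from the definition of absolute purity.
Conversely, write `M = Rⁿ / L`. As `Rⁿ` is projective, `Ext¹(M, X) = 0` says exactly that every
map `L → X` extends to `Rⁿ`. Take for `X` the families in `∏_T E(L / ⟨T⟩)`, `T` running over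
the finite subsets of `L` and `E(-)` injective, that vanish for all large `T`. A map into `X` from a
finitely generated submodule vanishes, at all large `T`, on a finite generating set and hence
altogether, while at the remaining `T` it extends by injectivity; so `X` is absolutely pure.
Hence `x ↦ (x mod ⟨T⟩)_T` extends from `L` to `Rⁿ`; the images of the `n` basis vectors all
vanish at some `T`, which forces `L = ⟨T⟩`.
-/

open CategoryTheory

/-- `Ext¹_R(M, N)` as an object of `ModuleCat ℤ`. -/
noncomputable abbrev ext1 {R : Type} [Ring R] (M N : ModuleCat.{0} R) : ModuleCat ℤ :=
  ((Ext ℤ (ModuleCat.{0} R) 1).obj (Opposite.op M)).obj N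

/-- A module `X` is absolutely pure if `Ext¹(F, X) = 0` for every finitely presented `F`. -/
def AbsolutelyPure {R : Type} [Ring R] (X : ModuleCat.{0} R) : Prop :=
  ∀ F : ModuleCat.{0} R, Module.FinitePresentation R F → Subsingleton (ext1 F X)

/-- A module `Z` is FP-projective if `Ext¹(Z, X) = 0` for every absolutely pure `X`. -/
def FPProjective {R : Type} [Ring R] (Z : ModuleCat.{0} R) : Prop :=
  ∀ X : ModuleCat.{0} R, AbsolutelyPure X → Subsingleton (ext1 Z X)

open Limits Filter

universe v

namespace CategoryTheory

variable {C : Type*} [Category C] [Abelian C]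

namespace ProjectiveResolution

variable {Z : C} (P : ProjectiveResolution Z)

noncomputable def toKernel : P.complex.X 1 ⟶ kernel (P.π.f 0) :=
  kernel.lift _ _ P.complex_d_comp_π_f_zero

lemma toKernel_ι : P.toKernel ≫ kernel.ι (P.π.f 0) = P.complex.d 1 0 :=
  kernel.lift_ι _ _ _

instance : Epi P.toKernel := P.exact₀.epi_kernelLift

lemma d_comp_toKernel : P.complex.d 2 1 ≫ P.toKernel = 0 := by
  rw [← cancel_mono (kernel.ι _), Category.assoc, toKernel_ι, HomologicalComplex.d_comp_d,
    zero_comp]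

lemma exact_toKernel : (ShortComplex.mk _ _ P.d_comp_toKernel).Exact := by
  let φ : ShortComplex.mk _ _ P.d_comp_toKernel ⟶
      ShortComplex.mk _ _ (P.complex.d_comp_d 2 1 0) :=
    { τ₁ := 𝟙 _, τ₂ := 𝟙 _, τ₃ := kernel.ι (P.π.f 0)
      comm₂₃ := (Category.id_comp _).trans P.toKernel_ι.symm }
  exact (ShortComplex.exact_iff_of_epi_of_isIso_of_mono φ).2 (P.exact_succ 0)

lemma isZero_ext_one_iff [EnoughProjectives C] {S : Type*} [Ring S] [Linear S C] (X : C) :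
    IsZero (((Ext S C 1).obj (Opposite.op Z)).obj X) ↔
      ∀ φ : kernel (P.π.f 0) ⟶ X, ∃ ψ : P.complex.X 0 ⟶ X, kernel.ι _ ≫ ψ = φ := by
  rw [(P.isoExt 1 X).isZero_iff, ← HomologicalComplex.exactAt_iff_isZero_homology,
    HomologicalComplex.exactAt_iff' _ 0 1 2 (by simp) (by simp), ShortComplex.moduleCat_exact_iff]
  change (∀ g : P.complex.X 1 ⟶ X, P.complex.d 2 1 ≫ g = 0 →
      ∃ h : P.complex.X 0 ⟶ X, P.complex.d 1 0 ≫ h = g) ↔ _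
  constructor
  · intro h φ
    obtain ⟨ψ, hψ⟩ := h (P.toKernel ≫ φ) (by rw [← Category.assoc, d_comp_toKernel, zero_comp])
    exact ⟨ψ, by rwa [← cancel_epi P.toKernel, ← Category.assoc, toKernel_ι]⟩
  · intro h g hg
    obtain ⟨φ, rfl⟩ := P.exact_toKernel.desc' g hg
    obtain ⟨ψ, rfl⟩ := h φ
    exact ⟨ψ, by rw [← Category.assoc, toKernel_ι]⟩

end ProjectiveResolution

variable [EnoughProjectives C]

lemma Projective.d_comp_self {X Y : C} (f : X ⟶ Y) : Projective.d f ≫ f = 0 :=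
  (Category.assoc _ _ _).trans ((congrArg _ (kernel.condition f)).trans comp_zero)

namespace ProjectiveResolution

variable {Z F : C}

noncomputable def ofEpiComplex (p : F ⟶ Z) : ChainComplex C ℕ :=
  ChainComplex.mk' F (Projective.syzygies p) (Projective.d p)
    (fun f => ⟨_, Projective.d f, Projective.d_comp_self f⟩)

lemma ofEpiComplex_d_1_0 (p : F ⟶ Z) : (ofEpiComplex p).d 1 0 = Projective.d p := by
  simp [ofEpiComplex]

lemma ofEpiComplex_exactAt_succ (p : F ⟶ Z) (n : ℕ) : (ofEpiComplex p).ExactAt (n + 1) := by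
  rw [HomologicalComplex.exactAt_iff' _ (n + 2) (n + 1) n (by simp) (by simp)]
  refine ShortComplex.exact_of_iso ?_ (exact_d_f ((ofEpiComplex p).d (n + 1) n))
  refine ShortComplex.isoMk (ChainComplex.mk'XIso F _ (Projective.d p)
    (fun f => ⟨_, Projective.d f, Projective.d_comp_self f⟩) n).symm
    (Iso.refl _) (Iso.refl _) ?_ ?_
  · dsimp [ofEpiComplex, HomologicalComplex.sc', HomologicalComplex.shortComplexFunctor']
    rw [ChainComplex.mk'_d, Iso.inv_hom_id_assoc, Category.comp_id]
  · exact (Category.id_comp _).trans (Category.comp_id _).symm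

instance (p : F ⟶ Z) [Projective F] (n : ℕ) : Projective ((ofEpiComplex p).X n) := by
  obtain (_ | _ | _ | n) := n
  · assumption
  all_goals apply Projective.projective_over

noncomputable def ofEpi (p : F ⟶ Z) [Projective F] [Epi p] : ProjectiveResolution Z where
  complex := ofEpiComplex p
  π := (ChainComplex.toSingle₀Equiv _ _).symm
    ⟨p, by rw [ofEpiComplex_d_1_0]; exact Projective.d_comp_self p⟩
  quasiIso := ⟨fun n => by
    cases n
    · rw [ChainComplex.quasiIsoAt₀_iff, ShortComplex.quasiIso_iff_of_zeros']
      · refine (ShortComplex.exact_and_epi_g_iff_of_iso ?_).2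
          ⟨exact_d_f p, by dsimp; infer_instance⟩
        exact ShortComplex.isoMk (Iso.refl _) (Iso.refl _) (Iso.refl _)
          ((Category.id_comp _).trans
            ((ofEpiComplex_d_1_0 p).symm.trans (Category.comp_id _).symm))
          ((Category.id_comp _).trans ((ChainComplex.toSingle₀Equiv_symm_apply_f_zero
            (C := ofEpiComplex p) p _).symm.trans (Category.comp_id _).symm))
      all_goals rfl
    · rw [quasiIsoAt_iff_exactAt']
      · apply ofEpiComplex_exactAt_succ
      · apply ChainComplex.exactAt_succ_single_obj⟩

lemma ofEpi_π_f_zero (p : F ⟶ Z) [Projective F] [Epi p] : (ofEpi p).π.f 0 = p :=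
  ChainComplex.toSingle₀Equiv_symm_apply_f_zero _ _

theorem isZero_ext_one_iff_of_epi {S : Type*} [Ring S] [Linear S C] (p : F ⟶ Z) [Projective F]
    [Epi p] (X : C) :
    IsZero (((Ext S C 1).obj (Opposite.op Z)).obj X) ↔
      ∀ φ : kernel p ⟶ X, ∃ ψ : F ⟶ X, kernel.ι p ≫ ψ = φ := by
  have h := (ofEpi p).isZero_ext_one_iff (S := S) X
  rw [ofEpi_π_f_zero] at h
  exact h

end ProjectiveResolution

end CategoryTheory

namespace Submodule

variable (R : Type*) [Ring R] {ι : Type*} (l : Filter ι) (E : ι → Type*)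
  [∀ i, AddCommGroup (E i)] [∀ i, Module R (E i)]

def eventuallyZero : Submodule R (∀ i, E i) where
  carrier := {x | ∀ᶠ i in l, x i = 0}
  add_mem' {x y} hx hy := by
    filter_upwards [hx, hy] with i hxi hyi
    simp [hxi, hyi]
  zero_mem' := Eventually.of_forall fun _ => rfl
  smul_mem' r x hx := by
    filter_upwards [hx] with i hxi
    simp [hxi]

variable {R l E}

lemma eventually_forall_apply_eq_zero {M : Type*} [AddCommGroup M] [Module R M]
    [Module.Finite R M] (φ : M →ₗ[R] eventuallyZero R l E) :
    ∀ᶠ i in l, ∀ x, (φ x : ∀ i, E i) i = 0 := by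
  obtain ⟨s, hs⟩ := Module.Finite.fg_top (R := R) (M := M)
  filter_upwards [(s.finite_toSet.eventually_all (l := l)).2 fun x _ => (φ x).2] with i hi
  have : (LinearMap.proj i ∘ₗ (eventuallyZero R l E).subtype ∘ₗ φ : M →ₗ[R] E i) = 0 :=
    LinearMap.ext_on hs fun x hx => hi x hx
  exact fun x => LinearMap.congr_fun this x

theorem exists_comp_subtype_eq_of_fg {P : Type v} [AddCommGroup P] [Module R P] {E : ι → Type v}
    [∀ i, AddCommGroup (E i)] [∀ i, Module R (E i)] [∀ i, Module.Injective R (E i)]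
    {L : Submodule R P} (hL : L.FG) (φ : L →ₗ[R] eventuallyZero R l E) :
    ∃ ψ : P →ₗ[R] eventuallyZero R l E, ψ ∘ₗ L.subtype = φ := by
  classical
  have : Module.Finite R L := Module.Finite.iff_fg.2 hL
  let φ' (i : ι) : L →ₗ[R] E i := LinearMap.proj i ∘ₗ (eventuallyZero R l E).subtype ∘ₗ φ
  choose ext hext using fun i => Module.Injective.out L.subtype Subtype.val_injective (φ' i)
  let ψ (i : ι) : P →ₗ[R] E i := if φ' i = 0 then 0 else ext i
  have hψ (i : ι) (x : L) : ψ i x = (φ x : ∀ i, E i) i := by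
    by_cases h : φ' i = 0
    · simp only [ψ, if_pos h]
      exact (LinearMap.congr_fun h x).symm
    · simp only [ψ, if_neg h]
      exact hext i x
  have hψ_zero : ∀ᶠ i in l, ψ i = 0 := by
    filter_upwards [eventually_forall_apply_eq_zero φ] with i hi
    exact if_pos (LinearMap.ext hi)
  refine ⟨LinearMap.codRestrict _ (LinearMap.pi ψ) fun v => ?_, ?_⟩
  · filter_upwards [hψ_zero] with i hi
    simp [hi]
  · ext x i
    exact hψ i x

end Submodule

instance ModuleCat.moduleInjective_of_injective {R : Type*} [Ring R] (X : ModuleCat.{v} R)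
    [Injective X] : Module.Injective R X :=
  Module.injective_module_of_injective_object (inj := ‹Injective X›) R X

section ModuleCat

variable {R : Type} [Ring R]

theorem subsingleton_ext1_iff_forall_exists_comp_subtype_eq {F M : Type} [AddCommGroup F]
    [Module R F] [Module.Projective R F] [AddCommGroup M] [Module R M] {p : F →ₗ[R] M}
    (hp : Function.Surjective p) (X : ModuleCat.{0} R) :
    Subsingleton (ext1 (ModuleCat.of R M) X) ↔ ∀ φ : LinearMap.ker p →ₗ[R] X,
      ∃ ψ : F →ₗ[R] X, ψ ∘ₗ (LinearMap.ker p).subtype = φ := by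
  have : Epi (ModuleCat.ofHom p) := (ModuleCat.epi_iff_surjective _).2 hp
  have hι : (ModuleCat.kernelIsoKer _).inv ≫ kernel.ι (ModuleCat.ofHom p) =
      ModuleCat.ofHom (LinearMap.ker p).subtype :=
    ModuleCat.kernelIsoKer_inv_kernel_ι _
  rw [← ModuleCat.isZero_iff_subsingleton,
    ProjectiveResolution.isZero_ext_one_iff_of_epi (ModuleCat.ofHom p)]
  constructor
  · intro h φ
    obtain ⟨ψ, hψ⟩ := h ((ModuleCat.kernelIsoKer _).hom ≫ ModuleCat.ofHom φ)
    refine ⟨ψ.hom, congrArg ModuleCat.Hom.hom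
      (?_ : ModuleCat.ofHom (LinearMap.ker p).subtype ≫ ψ = ModuleCat.ofHom φ)⟩
    rw [← hι, Category.assoc, hψ, Iso.inv_hom_id_assoc]
  · intro h φ
    obtain ⟨ψ, hψ⟩ := h ((ModuleCat.kernelIsoKer _).inv ≫ φ).hom
    refine ⟨ModuleCat.ofHom ψ, ?_⟩
    rw [← Iso.cancel_iso_inv_left (ModuleCat.kernelIsoKer _), ← Category.assoc, hι]
    exact ModuleCat.hom_ext hψ

theorem absolutelyPure_eventuallyZero {ι : Type} (l : Filter ι) (E : ι → Type)
    [∀ i, AddCommGroup (E i)] [∀ i, Module R (E i)] [∀ i, Module.Injective R (E i)] :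
    AbsolutelyPure (ModuleCat.of R (Submodule.eventuallyZero R l E)) := by
  intro F _
  obtain ⟨m, q, hq⟩ := Module.Finite.exists_fin' R F
  rw [show F = ModuleCat.of R F from rfl, subsingleton_ext1_iff_forall_exists_comp_subtype_eq hq]
  exact fun φ => Submodule.exists_comp_subtype_eq_of_fg (Module.FinitePresentation.fg_ker q hq) φ

variable (R) in
noncomputable abbrev eventuallyZeroQuotients (L : Type) [AddCommGroup L] [Module R L] :
    Submodule R (∀ T : Finset L,
      ((Injective.under (ModuleCat.of R (L ⧸ Submodule.span R (T : Set L))) : ModuleCat R) :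
        Type)) :=
  Submodule.eventuallyZero R atTop _

theorem Submodule.fg_of_forall_exists_comp_subtype_eq {P : Type} [AddCommGroup P] [Module R P]
    [Module.Finite R P] (L : Submodule R P)
    (h : ∀ φ : L →ₗ[R] eventuallyZeroQuotients R L,
      ∃ ψ : P →ₗ[R] eventuallyZeroQuotients R L, ψ ∘ₗ L.subtype = φ) :
    L.FG := by
  classical
  let ι (T : Finset L) := (Injective.ι (ModuleCat.of R (L ⧸ span R (T : Set L)))).hom
  let Φ : L →ₗ[R] ∀ T : Finset L, _ :=
    LinearMap.pi fun T => ι T ∘ₗ (span R (T : Set L)).mkQ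
  have hΦ (x : L) : Φ x ∈ eventuallyZeroQuotients R L := by
    filter_upwards [eventually_ge_atTop {x}] with T hT
    simp [Φ, (Quotient.mk_eq_zero _).2 (subset_span (hT (Finset.mem_singleton_self x)))]
  obtain ⟨ψ, hψ⟩ := h (LinearMap.codRestrict _ Φ hΦ)
  obtain ⟨T, hT⟩ := (eventually_forall_apply_eq_zero ψ).exists
  refine (Submodule.fg_top L).1 ⟨T, eq_top_iff.2 fun x _ => ?_⟩
  have hx : ι T ((span R (T : Set L)).mkQ x) = 0 :=
    (congrFun (congrArg Subtype.val (LinearMap.congr_fun hψ x)) T).symm.trans (hT x)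
  have hι : Function.Injective (ι T) := (ModuleCat.mono_iff_injective _).1 inferInstance
  rw [← Quotient.mk_eq_zero, ← mkQ_apply]
  exact hι (hx.trans (map_zero _).symm)

end ModuleCat

theorem stmt4 (R : Type) [Ring R] (M : Type) [AddCommGroup M] [Module R M]
    (hM : Module.Finite R M) :
    FPProjective (ModuleCat.of R M) ↔ Module.FinitePresentation R M := by
  refine ⟨fun h => ?_, fun hFP X hX => hX _ hFP⟩
  obtain ⟨n, p, hp⟩ := Module.Finite.exists_fin' R M
  refine (Module.FinitePresentation.fg_ker_iff p hp).1
    (Submodule.fg_of_forall_exists_comp_subtype_eq _ ?_)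
  exact (subsingleton_ext1_iff_forall_exists_comp_subtype_eq hp _).1
    (h _ (absolutelyPure_eventuallyZero _ _))
end

section
/- Let R be a ring and M a class of finitely generated right R-modules. The following are equivalent: (i) every module in M embeds into a finitely generated projective right R-module; (ii) for every absolutely pure right R-module X, every homomorphism M → X with M ∈ M factors through a projective right R-module; (iii) for every injective right R-module X, every homomorphism M → X with M ∈ M factors through a projective module; (iv) for each M ∈ M, every homomorphism from M into its injective envelope factors through a projective module. -/
open CategoryTheory

/-- A linear map factors through a projective module. -/
def FactorsThroughProjective {R : Type} [Ring R] {M X : ModuleCat.{0} R}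
    (f : M →ₗ[R] X) : Prop :=
  ∃ P : ModuleCat.{0} R, Module.Projective R P ∧
    ∃ (α : M →ₗ[R] P) (β : P →ₗ[R] X), β.comp α = f

/-!
Let `0 → M → P → P/M → 0` with `P` projective. Resolving `P/M` by `P` followed by a projective
resolution of `M`, a morphism `f : M → X` becomes a 1-cocycle, so `Ext¹(P/M, X) = 0` lets `f`
extend to `P`. This gives (i) ⇒ (ii) when `P` is finitely generated, since `P/M` is then finitely
presented; (ii) ⇒ (iii) because injective modules are absolutely pure, and (iii) ⇒ (iv) is a
special case. For (iv) ⇒ (i), factor the embedding `M ↪ E(M)` as `M → Q → E(M)` with `Q`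
projective: `M → Q` is injective, `Q` is a direct summand of a free module, and the image of the
finitely generated `M` lies in a finitely generated free summand.
-/

universe u

open Limits

namespace CategoryTheory

variable {C : Type*} [Category C] [Abelian C]

namespace ShortComplex

lemma Exact.mk_g_comp_mono {S : ShortComplex C} (hS : S.Exact) {X : C} (i : S.X₃ ⟶ X) [Mono i] :
    (ShortComplex.mk S.f (S.g ≫ i) (by simp)).Exact :=
  (exact_iff_of_epi_of_isIso_of_mono
    ({ τ₁ := 𝟙 _, τ₂ := 𝟙 _, τ₃ := i } : S ⟶ ShortComplex.mk S.f (S.g ≫ i) (by simp))).1 hS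

lemma Exact.mk_epi_comp_f {S : ShortComplex C} (hS : S.Exact) {X : C} (p : X ⟶ S.X₁) [Epi p] :
    (ShortComplex.mk (p ≫ S.f) S.g (by simp)).Exact :=
  (exact_iff_of_epi_of_isIso_of_mono
    ({ τ₁ := p, τ₂ := 𝟙 _, τ₃ := 𝟙 _ } : ShortComplex.mk (p ≫ S.f) S.g (by simp) ⟶ S)).2 hS

end ShortComplex

variable [EnoughProjectives C]

-- `syzygies f` and the objects of `ofComplex` agree with their definitions only up to unfolding,
-- which `rw` does not see through; hence the `erw`s in this section.
lemma Projective.d_comp_comp {X Y Z : C} (f : X ⟶ Y) (g : Y ⟶ Z) :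
    Projective.d f ≫ f ≫ g = 0 := by
  erw [Category.assoc, kernel.condition_assoc, zero_comp, comp_zero]

lemma ProjectiveResolution.ofComplex_d_comp_π_comp {X Y : C} (f : X ⟶ Y) :
    (ProjectiveResolution.ofComplex X).d 1 0 ≫ Projective.π X ≫ f = 0 := by
  erw [ProjectiveResolution.ofComplex_d_1_0]
  exact Projective.d_comp_comp _ _

noncomputable def ShortComplex.ShortExact.projectiveResolution {S : ShortComplex C}
    (hS : S.ShortExact) [Projective S.X₂] : ProjectiveResolution S.X₃ where
  complex := (ProjectiveResolution.ofComplex S.X₁).augment (Projective.π S.X₁ ≫ S.f)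
    (ProjectiveResolution.ofComplex_d_comp_π_comp _)
  π := (ChainComplex.toSingle₀Equiv _ _).symm ⟨S.g, by erw [Category.assoc, S.zero, comp_zero]⟩
  projective n := by cases n <;> dsimp <;> infer_instance
  quasiIso := ⟨fun n => by
    cases n with
    | zero =>
      rw [ChainComplex.quasiIsoAt₀_iff, ShortComplex.quasiIso_iff_of_zeros']
      · refine (ShortComplex.exact_and_epi_g_iff_of_iso
          (S₁ := ShortComplex.mk (Projective.π S.X₁ ≫ S.f) S.g (by simp)) ?_).1
          ⟨hS.exact.mk_epi_comp_f _, hS.epi_g⟩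
        refine ShortComplex.isoMk (Iso.refl _) (Iso.refl _) (Iso.refl _) ?_ ?_
        · exact (Category.id_comp _).trans (Category.comp_id _).symm
        · exact (Category.id_comp _).trans
            ((ChainComplex.toSingle₀Equiv_symm_apply_f_zero _ _).trans (Category.comp_id _).symm)
      all_goals rfl
    | succ n =>
      rw [quasiIsoAt_iff_exactAt' _ _ (ChainComplex.exactAt_succ_single_obj _ _),
        HomologicalComplex.exactAt_iff' _ (n + 2) (n + 1) n (by simp) (by simp)]
      cases n with
      | zero =>
        have := hS.mono_f
        refine (ShortComplex.exact_iff_of_iso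
          (S₁ := ShortComplex.mk _ _ (Projective.d_comp_comp (Projective.π S.X₁) S.f)) ?_).1
          ((exact_d_f (Projective.π S.X₁)).mk_g_comp_mono S.f)
        refine ShortComplex.isoMk (Iso.refl _) (Iso.refl _) (Iso.refl _) ?_ ?_
        · exact (Category.id_comp _).trans
            ((ProjectiveResolution.ofComplex_d_1_0 _).trans (Category.comp_id _).symm)
        · exact (Category.id_comp _).trans (Category.comp_id _).symm
      | succ n =>
        exact (HomologicalComplex.exactAt_iff' _ (n + 2) (n + 1) n (by simp) (by simp)).1
          (ProjectiveResolution.ofComplex_exactAt_succ S.X₁ n)⟩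

variable {A : Type*} [Ring A] [Linear A C]

lemma ProjectiveResolution.isZero_Ext_succ_iff {X : C} (P : ProjectiveResolution X) (Y : C)
    (n : ℕ) :
    IsZero (((Ext A C (n + 1)).obj (Opposite.op X)).obj Y) ↔
      ∀ φ : P.complex.X (n + 1) ⟶ Y, P.complex.d (n + 2) (n + 1) ≫ φ = 0 →
        ∃ ψ : P.complex.X n ⟶ Y, P.complex.d (n + 1) n ≫ ψ = φ := by
  rw [Iso.isZero_iff (P.isoExt (n + 1) Y), ← HomologicalComplex.exactAt_iff_isZero_homology,
    HomologicalComplex.exactAt_iff' _ n (n + 1) (n + 2) (by simp) (by simp),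
    ShortComplex.moduleCat_exact_iff]
  rfl

lemma isZero_Ext_succ_of_injective (X Y : C) [Injective Y] (n : ℕ) :
    IsZero (((Ext A C (n + 1)).obj (Opposite.op X)).obj Y) :=
  ((ProjectiveResolution.of X).isZero_Ext_succ_iff Y n).2 fun φ hφ =>
    ⟨_, ((ProjectiveResolution.of X).exact_succ n).comp_descToInjective φ hφ⟩

lemma ShortComplex.ShortExact.exists_comp_eq_of_isZero_Ext {S : ShortComplex C}
    (hS : S.ShortExact) [Projective S.X₂] {Y : C}
    (hY : IsZero (((Ext A C 1).obj (Opposite.op S.X₃)).obj Y)) (f : S.X₁ ⟶ Y) :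
    ∃ g : S.X₂ ⟶ Y, S.f ≫ g = f := by
  obtain ⟨g, hg⟩ := (hS.projectiveResolution.isZero_Ext_succ_iff Y 0).1 hY
    (Projective.π S.X₁ ≫ f) (ProjectiveResolution.ofComplex_d_comp_π_comp f)
  exact ⟨g, (cancel_epi (Projective.π S.X₁)).1 ((Category.assoc _ _ _).symm.trans hg)⟩

end CategoryTheory

theorem Module.Projective.exists_finite_finsupp_of_injective {R M : Type*} {Q : Type u} [Ring R]
    [AddCommGroup M] [Module R M] [Module.Finite R M] [AddCommGroup Q] [Module R Q]
    [Module.Projective R Q] {α : M →ₗ[R] Q} (hα : Function.Injective α) :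
    ∃ (ι : Type u) (_ : Finite ι) (g : M →ₗ[R] ι →₀ R), Function.Injective g := by
  obtain ⟨s, hs⟩ := Module.projective_def.1 ‹Module.Projective R Q›
  let t := s ∘ₗ α
  have ht : Function.Injective t := hs.injective.comp hα
  obtain ⟨G, hG⟩ := Submodule.fg_range t
  let S : Set Q := ⋃ x ∈ (G : Set (Q →₀ R)), x.support
  have hS : S.Finite := G.finite_toSet.biUnion fun x _ => x.support.finite_toSet
  have hle : LinearMap.range t ≤ Finsupp.supported R R S :=
    hG ▸ Finsupp.span_le_supported_biUnion_support R _
  refine ⟨S, hS.to_subtype, (Finsupp.supportedEquivFinsupp S).toLinearMap ∘ₗ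
    t.codRestrict _ fun m => hle ⟨m, rfl⟩, ?_⟩
  exact (Finsupp.supportedEquivFinsupp (M := R) (R := R) S).injective.comp
    ((LinearMap.injective_codRestrict_iff _).2 ht)

section AbsolutelyPure

variable {R : Type} [Ring R]

lemma absolutelyPure_of_injective {X : ModuleCat.{0} R} (hX : Module.Injective R X) :
    AbsolutelyPure X := fun F _ =>
  have : Injective X := Module.injective_object_of_injective_module R X
  ModuleCat.subsingleton_of_isZero (isZero_Ext_succ_of_injective F X 0)

lemma AbsolutelyPure.exists_comp_eq {X : ModuleCat.{0} R} (hX : AbsolutelyPure X)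
    {M P : ModuleCat.{0} R} [Module.Finite R M] [Module.Finite R P] [Module.Projective R P]
    {ι : M →ₗ[R] P} (hι : Function.Injective ι) (f : M →ₗ[R] X) :
    ∃ g : P →ₗ[R] X, g ∘ₗ ι = f := by
  let S := ModuleCat.shortComplexOfCompEqZero _ _ ι.exact_map_mkQ_range.linearMap_comp_eq_zero
  have hS : S.ShortExact := ModuleCat.shortComplex_shortExact S ι.exact_map_mkQ_range hι
    (Submodule.mkQ_surjective _)
  have : Module.FinitePresentation R P := Module.finitePresentation_of_projective R P
  have hF : Module.FinitePresentation R (P ⧸ LinearMap.range ι) :=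
    Module.finitePresentation_of_surjective _ (Submodule.mkQ_surjective _)
      (by rw [Submodule.ker_mkQ]; exact Submodule.fg_range ι)
  have : Subsingleton (ext1 S.X₃ X) := hX _ hF
  obtain ⟨g, hg⟩ := hS.exists_comp_eq_of_isZero_Ext (A := ℤ) (ModuleCat.isZero_of_subsingleton _)
    (ModuleCat.ofHom f)
  exact ⟨g.hom, congrArg ModuleCat.Hom.hom hg⟩

end AbsolutelyPure

theorem stmt5 (R : Type) [Ring R] (𝓜 : ModuleCat.{0} R → Prop)
    (hfg : ∀ M : ModuleCat.{0} R, 𝓜 M → Module.Finite R M) :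
    List.TFAE
      [∀ M : ModuleCat.{0} R, 𝓜 M → ∃ P : ModuleCat.{0} R,
          Module.Finite R P ∧ Module.Projective R P ∧
          ∃ ι : M →ₗ[R] P, Function.Injective ι,
       ∀ X : ModuleCat.{0} R, AbsolutelyPure X →
          ∀ M : ModuleCat.{0} R, 𝓜 M → ∀ f : M →ₗ[R] X, FactorsThroughProjective f,
       ∀ X : ModuleCat.{0} R, Module.Injective R X →
          ∀ M : ModuleCat.{0} R, 𝓜 M → ∀ f : M →ₗ[R] X, FactorsThroughProjective f,
       ∀ M : ModuleCat.{0} R, 𝓜 M → ∀ E : ModuleCat.{0} R, Module.Injective R E →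
          ∀ ι : M →ₗ[R] E, Function.Injective ι → FactorsThroughProjective ι] := by
  tfae_have 1 → 2 := by
    intro h1 X hX M hM f
    obtain ⟨P, _, hP, ι, hι⟩ := h1 M hM
    have := hfg M hM
    obtain ⟨g, hg⟩ := hX.exists_comp_eq hι f
    exact ⟨P, hP, ι, g, hg⟩
  tfae_have 2 → 3 := fun h2 X hX => h2 X (absolutelyPure_of_injective hX)
  tfae_have 3 → 4 := fun h3 M hM E hE ι _ => h3 E hE M hM ι
  tfae_have 4 → 1 := by
    intro h4 M hM
    have := hfg M hM
    have hι := (ModuleCat.mono_iff_injective (Injective.ι M)).1 inferInstance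
    obtain ⟨Q, _, α, β, hβα⟩ := h4 M hM (Injective.under M)
      (Module.injective_module_of_injective_object (inj := Injective.injective_under M) R _) _ hι
    have hα : Function.Injective α :=
      Function.Injective.of_comp (f := β) (by rwa [← LinearMap.coe_comp, hβα])
    obtain ⟨ι, _, g, hg⟩ := Module.Projective.exists_finite_finsupp_of_injective hα
    exact ⟨ModuleCat.of R (ι →₀ R), inferInstance, inferInstance, g, hg⟩
  tfae_finish
end

section
/- A ring R is a right IF ring (every injective right R-module is flat) if and only if every finitely presented right R-module embeds into a finitely generated projective right R-module. -/
/-!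
A module is flat iff every map into it from a finitely presented module factors through a finite
free module. If injective modules are flat, embed a finitely presented `N` into an injective module;
the embedding factors through a finite free module, so its first factor is injective. Conversely, a
map from a finitely presented `N` to an injective `X` extends along an embedding of `N` into a
finitely generated projective `P`, and `P` is a retract of a finite free module.
-/

open LinearMap

universe u v

section Ring

variable {R : Type u} [Ring R]

theorem Module.exists_injective_linearMap_to_injective [Small.{v} R] (N : Type v) [AddCommGroup N]
    [Module R N] :
    ∃ E : ModuleCat.{v} R, Module.Injective R E ∧ ∃ i : N →ₗ[R] E, Function.Injective i := by
  let N' := ModuleCat.of R N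
  have := CategoryTheory.Injective.injective_under N'
  refine ⟨CategoryTheory.Injective.under N', Module.injective_module_of_injective_object R _,
    (CategoryTheory.Injective.ι N').hom, ?_⟩
  exact (ModuleCat.mono_iff_injective _).mp (CategoryTheory.Injective.ι_mono N')

theorem Module.Projective.exists_factorization_of_finite {M P : Type*} [AddCommGroup M]
    [Module R M] [AddCommGroup P] [Module R P] [Module.Finite R P] [Module.Projective R P]
    (g : P →ₗ[R] M) :
    ∃ (k : ℕ) (a : P →ₗ[R] (Fin k →₀ R)) (b : (Fin k →₀ R) →ₗ[R] M), g = b ∘ₗ a := by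
  obtain ⟨k, π, hπ⟩ := Module.Finite.exists_fin' R P
  let e := Finsupp.linearEquivFunOnFinite R R (Fin k)
  let π' := π ∘ₗ e.toLinearMap
  obtain ⟨s, hs⟩ := Module.projective_lifting_property π' LinearMap.id (hπ.comp e.surjective)
  exact ⟨k, s, g ∘ₗ π', by rw [comp_assoc, hs, comp_id]⟩

end Ring

namespace Module.Flat

variable {R : Type u} [CommRing R] {M : Type*} [AddCommGroup M] [Module R M]

theorem exists_injective_finsupp_of_injective [Flat R M] {N : Type*} [AddCommGroup N]
    [Module R N] [FinitePresentation R N] {i : N →ₗ[R] M} (hi : Function.Injective i) :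
    ∃ (k : ℕ) (j : N →ₗ[R] (Fin k →₀ R)), Function.Injective j := by
  obtain ⟨k, j, q, rfl⟩ := exists_factorization_of_finitePresentation i
  rw [coe_comp] at hi
  exact ⟨k, j, hi.of_comp⟩

theorem of_forall_exists_factorization_of_finitePresentation
    (h : ∀ (N : Type u) [AddCommGroup N] [Module R N] [FinitePresentation R N] (g : N →ₗ[R] M),
      ∃ (k : ℕ) (a : N →ₗ[R] (Fin k →₀ R)) (b : (Fin k →₀ R) →ₗ[R] M), g = b ∘ₗ a) :
    Flat R M := by
  refine of_forall_exists_factorization fun {l f x} hxf => ?_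
  let S := Submodule.span R {f}
  have : FinitePresentation R ((Fin l →₀ R) ⧸ S) :=
    finitePresentation_of_free_of_surjective S.mkQ S.mkQ_surjective
      (by rw [Submodule.ker_mkQ]; exact ⟨{f}, by simp [S]⟩)
  have hSx : S ≤ ker x := by rwa [Submodule.span_le, Set.singleton_subset_iff]
  obtain ⟨k, a, b, hab⟩ := h _ (S.liftQ x hSx)
  refine ⟨k, a ∘ₗ S.mkQ, b, ?_, ?_⟩
  · rw [← comp_assoc, ← hab, Submodule.liftQ_mkQ]
  · simp [(Submodule.Quotient.mk_eq_zero S).mpr (Submodule.mem_span_singleton_self f)]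

end Module.Flat

theorem stmt6 (R : Type) [CommRing R] :
    (∀ X : ModuleCat.{0} R, Module.Injective R X → Module.Flat R X) ↔
      (∀ N : ModuleCat.{0} R, Module.FinitePresentation R N →
        ∃ P : ModuleCat.{0} R, Module.Finite R P ∧ Module.Projective R P ∧
          ∃ ι : N →ₗ[R] P, Function.Injective ι) := by
  constructor
  · intro hIF N hN
    obtain ⟨E, hE, i, hi⟩ := Module.exists_injective_linearMap_to_injective (R := R) N
    have := hIF E hE
    obtain ⟨k, j, hj⟩ := Module.Flat.exists_injective_finsupp_of_injective hi
    exact ⟨ModuleCat.of R (Fin k →₀ R), inferInstance, inferInstance, j, hj⟩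
  · intro hEmb X hX
    refine Module.Flat.of_forall_exists_factorization_of_finitePresentation fun N _ _ _ g => ?_
    obtain ⟨P, _, _, j, hj⟩ := hEmb (ModuleCat.of R N) ‹Module.FinitePresentation R N›
    obtain ⟨y, rfl⟩ := hX.extension_property R X N P j hj g
    obtain ⟨k, a, b, rfl⟩ := Module.Projective.exists_factorization_of_finite y
    exact ⟨k, a ∘ₗ j, b, (comp_assoc _ _ _).symm⟩
end

section
/- Let R be a ring. The class of absolutely pure right R-modules is closed under homomorphic images if and only if for every short exact sequence 0 → Z → U → V → 0 with V finitely presented and U projective, the module Z is projective (i.e., R is right semihereditary). -/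
/-!
The whole proof rests on one criterion: for `0 → Z → U → V → 0` with `U` projective,
`Ext¹(V, Y) = 0` iff every map `Z → Y` extends to `U`. This is read off a projective resolution of
`V` and carried over to an arbitrary such presentation by comparing the two presentations.

If `Z` is projective, a map `Z → Y` lifts along any surjection `X → Y`, so the vanishing of
`Ext¹(V, -)` passes to quotients. Conversely, write `Z = A / K` with `A` free and embed `A` in an
injective module `E`. Injective modules are absolutely pure, hence so is `Y = E / K`; extending the
inclusion `A / K → E / K` over `U` and lifting to `E` gives a map `Z → E` with image in `A`,
which is a section of `A → Z`.
-/

open CategoryTheory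

open LinearMap

section LinearAlgebra

variable {R : Type*} [Ring R] {M N P Q Y : Type*} [AddCommGroup M] [AddCommGroup N]
  [AddCommGroup P] [AddCommGroup Q] [AddCommGroup Y] [Module R M] [Module R N] [Module R P]
  [Module R Q] [Module R Y]

theorem Function.Exact.exists_comp_eq_of_comp_eq_zero {f : M →ₗ[R] N} {g : N →ₗ[R] P}
    (hfg : Function.Exact f g) (hg : Function.Surjective g) {α : N →ₗ[R] Y} (hα : α ∘ₗ f = 0) :
    ∃ φ : P →ₗ[R] Y, φ ∘ₗ g = α :=
  ⟨(range f).liftQ α (range_le_ker_iff.2 hα) ∘ₗ (hfg.linearEquivOfSurjective hg).symm.toLinearMap,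
    by ext x; simp⟩

theorem LinearMap.exists_comp_eq_of_range_le {f : M →ₗ[R] N} (hf : Function.Injective f)
    {k : Q →ₗ[R] N} (hk : range k ≤ range f) : ∃ l : Q →ₗ[R] M, f ∘ₗ l = k :=
  ⟨(LinearEquiv.ofInjective f hf).symm.toLinearMap ∘ₗ k.codRestrict _ fun x => hk ⟨x, rfl⟩,
    by ext x; simp⟩

theorem forall_exists_comp_eq_iff_of_exact {d : M →ₗ[R] N} {e : N →ₗ[R] P}
    (hde : Function.Exact d e) (he : Function.Surjective e) (f : P →ₗ[R] Q) :
    (∀ α : N →ₗ[R] Y, α ∘ₗ d = 0 → ∃ β : Q →ₗ[R] Y, β ∘ₗ (f ∘ₗ e) = α) ↔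
      ∀ φ : P →ₗ[R] Y, ∃ ψ : Q →ₗ[R] Y, ψ ∘ₗ f = φ := by
  constructor
  · intro h φ
    obtain ⟨ψ, hψ⟩ := h (φ ∘ₗ e) (by rw [comp_assoc, hde.linearMap_comp_eq_zero, comp_zero])
    exact ⟨ψ, (cancel_right he).1 hψ⟩
  · intro h α hα
    obtain ⟨φ, rfl⟩ := hde.exists_comp_eq_of_comp_eq_zero he hα
    obtain ⟨ψ, rfl⟩ := h φ
    exact ⟨ψ, rfl⟩

/-- For lifts `a : U' → U`, `b : U → U'` of the identity of `V`, the map `id - a ∘ b` factors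
through `Z` and corrects the restriction to `Z` of an extension through `U'`. -/
theorem forall_exists_comp_eq_of_exact_of_exact {Z U Z' U' V : Type*} [AddCommGroup Z]
    [AddCommGroup U] [AddCommGroup Z'] [AddCommGroup U'] [AddCommGroup V] [Module R Z]
    [Module R U] [Module R Z'] [Module R U'] [Module R V] [Module.Projective R U]
    [Module.Projective R U']
    {f : Z →ₗ[R] U} {g : U →ₗ[R] V} (hf : Function.Injective f) (hfg : Function.Exact f g)
    (hg : Function.Surjective g) {f' : Z' →ₗ[R] U'} {g' : U' →ₗ[R] V}
    (hfg' : Function.Exact f' g') (hg' : Function.Surjective g')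
    (h' : ∀ φ' : Z' →ₗ[R] Y, ∃ ψ' : U' →ₗ[R] Y, ψ' ∘ₗ f' = φ') (φ : Z →ₗ[R] Y) :
    ∃ ψ : U →ₗ[R] Y, ψ ∘ₗ f = φ := by
  obtain ⟨b, hb⟩ := Module.projective_lifting_property g' g hg'
  obtain ⟨a, ha⟩ := Module.projective_lifting_property g g' hg
  obtain ⟨a', ha'⟩ : ∃ a' : Z' →ₗ[R] Z, f ∘ₗ a' = a ∘ₗ f' :=
    exists_comp_eq_of_range_le hf (by
      rw [← hfg.linearMap_ker_eq, range_le_ker_iff, ← comp_assoc, ha,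
        hfg'.linearMap_comp_eq_zero])
  obtain ⟨c, hc⟩ : ∃ c : U →ₗ[R] Z, f ∘ₗ c = LinearMap.id - a ∘ₗ b :=
    exists_comp_eq_of_range_le hf (by
      rw [← hfg.linearMap_ker_eq, range_le_ker_iff, comp_sub, ← comp_assoc, ha, hb, comp_id,
        sub_self])
  obtain ⟨ψ', hψ'⟩ := h' (φ ∘ₗ a')
  refine ⟨ψ' ∘ₗ b + φ ∘ₗ c, LinearMap.ext fun z => ?_⟩
  obtain ⟨z', hz'⟩ : b (f z) ∈ range f' := by
    rw [← hfg'.linearMap_ker_eq, mem_ker, ← LinearMap.comp_apply, hb]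
    exact hfg.apply_apply_eq_zero z
  have hcz : c (f z) = z - a' z' := hf <| by
    rw [← LinearMap.comp_apply, hc, map_sub, ← LinearMap.comp_apply f a', ha']
    simp [hz']
  simp [hcz, ← hz', ← LinearMap.comp_apply ψ' f', hψ']

/-- `E ⧸ i(ker p)` is the pushout of `i` along `p`; a lift to `E` of the induced map from `Z`
lands in the image of `i` and yields a section of `p`. -/
theorem exists_comp_eq_id_of_mkQ_comp_eq {A Z E : Type*} [AddCommGroup A] [AddCommGroup Z]
    [AddCommGroup E] [Module R A] [Module R Z] [Module R E]
    {p : A →ₗ[R] Z} (hp : Function.Surjective p) {i : A →ₗ[R] E} (hi : Function.Injective i)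
    {s : Z →ₗ[R] E} (hs : ((ker p).map i).mkQ ∘ₗ s ∘ₗ p = ((ker p).map i).mkQ ∘ₗ i) :
    ∃ σ : Z →ₗ[R] A, p ∘ₗ σ = LinearMap.id := by
  have hsp (a : A) : ∃ a' ∈ ker p, s (p a) = i (a + a') := by
    obtain ⟨a', ha', h⟩ := (Submodule.Quotient.eq _).1 congr($hs a)
    exact ⟨a', ha', by rw [map_add, h, add_sub_cancel, LinearMap.comp_apply]⟩
  obtain ⟨σ, hσ⟩ := exists_comp_eq_of_range_le hi (k := s) <| by
    rintro _ ⟨z, rfl⟩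
    obtain ⟨a, rfl⟩ := hp z
    obtain ⟨a', -, h⟩ := hsp a
    exact ⟨a + a', h.symm⟩
  refine ⟨σ, (cancel_right hp).1 (LinearMap.ext fun a => ?_)⟩
  obtain ⟨a', ha', h⟩ := hsp a
  have : σ (p a) = a + a' := hi (by rw [← h, ← LinearMap.comp_apply, hσ])
  simp [this, mem_ker.1 ha']

end LinearAlgebra

section Ext

variable {R : Type} [Ring R] {Z U V : ModuleCat.{0} R} {f : Z →ₗ[R] U} {g : U →ₗ[R] V}

theorem subsingleton_ext1_iff_of_projectiveResolution (P : ProjectiveResolution V)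
    (Y : ModuleCat.{0} R) :
    Subsingleton (ext1 V Y) ↔ ∀ α : P.complex.X 1 →ₗ[R] Y, α ∘ₗ (P.complex.d 2 1).hom = 0 →
      ∃ β : P.complex.X 0 →ₗ[R] Y, β ∘ₗ (P.complex.d 1 0).hom = α := by
  rw [← ModuleCat.isZero_iff_subsingleton, (P.isoExt 1 Y).isZero_iff,
    ← HomologicalComplex.exactAt_iff_isZero_homology,
    HomologicalComplex.exactAt_iff' _ 0 1 2 (by simp) (by simp),
    ShortComplex.moduleCat_exact_iff]
  refine ModuleCat.homEquiv.forall_congr fun α => ?_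
  refine imp_congr ?_ (ModuleCat.homEquiv.exists_congr fun β => ?_)
  · exact ModuleCat.hom_ext_iff (f := P.complex.d 2 1 ≫ α) (g := 0)
  · exact ModuleCat.hom_ext_iff (f := P.complex.d 1 0 ≫ β) (g := α)

theorem subsingleton_ext1_iff [Module.Projective R U] (hf : Function.Injective f)
    (hfg : Function.Exact f g) (hg : Function.Surjective g) (Y : ModuleCat.{0} R) :
    Subsingleton (ext1 V Y) ↔ ∀ φ : Z →ₗ[R] Y, ∃ ψ : U →ₗ[R] Y, ψ ∘ₗ f = φ := by
  let P := ProjectiveResolution.of V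
  let d := (P.complex.d 1 0).hom
  have hd : Function.Exact (P.complex.d 2 1).hom d :=
    (ShortComplex.ShortExact.moduleCat_exact_iff_function_exact _).1 <|
      (HomologicalComplex.exactAt_iff' _ 2 1 0 (by simp) (by simp)).1 (P.complex_exactAt_succ 0)
  have hπ : Function.Exact d (P.π.f 0).hom :=
    (ShortComplex.ShortExact.moduleCat_exact_iff_function_exact _).1 P.exact₀
  have hπ' : Function.Exact (range d).subtype (P.π.f 0).hom := by
    rw [exact_iff, Submodule.range_subtype, ← exact_iff.1 hπ]
  have hπsurj : Function.Surjective (P.π.f 0).hom :=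
    (ModuleCat.epi_iff_surjective _).1 inferInstance
  rw [subsingleton_ext1_iff_of_projectiveResolution P]
  refine (forall_exists_comp_eq_iff_of_exact (f := (range d).subtype)
    ((range d).injective_subtype.comp_exact_iff_exact.1 hd) d.surjective_rangeRestrict).trans ?_
  exact ⟨fun h => forall_exists_comp_eq_of_exact_of_exact hf hfg hg hπ' hπsurj h,
    fun h =>
      forall_exists_comp_eq_of_exact_of_exact (range d).injective_subtype hπ' hπsurj hfg hg h⟩

theorem subsingleton_ext1_of_surjective [Module.Projective R Z] [Module.Projective R U]
    (hf : Function.Injective f) (hfg : Function.Exact f g) (hg : Function.Surjective g)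
    {X Y : ModuleCat.{0} R} {q : X →ₗ[R] Y} (hq : Function.Surjective q)
    (hX : Subsingleton (ext1 V X)) : Subsingleton (ext1 V Y) := by
  rw [subsingleton_ext1_iff hf hfg hg] at hX ⊢
  intro φ
  obtain ⟨φ', rfl⟩ := Module.projective_lifting_property q φ hq
  obtain ⟨ψ, rfl⟩ := hX φ'
  exact ⟨q ∘ₗ ψ, rfl⟩

theorem subsingleton_ext1_of_injective (E : ModuleCat.{0} R) [Injective E] :
    Subsingleton (ext1 V E) := by
  let p := Finsupp.linearCombination R (id : V → V)
  rw [subsingleton_ext1_iff (Z := .of R (ker p)) (U := .of R (V →₀ R)) (ker p).injective_subtype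
    (exact_subtype_ker_map p) (Finsupp.linearCombination_id_surjective R V)]
  have := (Module.injective_iff_injective_object R E).2 ‹_›
  exact Module.Injective.extension_property R E _ _ _ (ker p).injective_subtype

theorem projective_of_subsingleton_ext1 [Module.Projective R U] (hf : Function.Injective f)
    (hfg : Function.Exact f g) (hg : Function.Surjective g)
    (h : ∀ (E : ModuleCat.{0} R) [Injective E] (Y : ModuleCat.{0} R) (q : E →ₗ[R] Y),
      Function.Surjective q → Subsingleton (ext1 V Y)) :
    Module.Projective R Z := by
  let p := Finsupp.linearCombination R (id : Z → Z)
  have hp : Function.Surjective p := Finsupp.linearCombination_id_surjective R Z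
  let E := Injective.under (ModuleCat.of R (Z →₀ R))
  let i : (Z →₀ R) →ₗ[R] E := (Injective.ι (ModuleCat.of R (Z →₀ R))).hom
  have hi : Function.Injective i := (ModuleCat.mono_iff_injective (Injective.ι _)).1 inferInstance
  let K := (ker p).map i
  have hY := (subsingleton_ext1_iff hf hfg hg (.of R (E ⧸ K))).1 (h E _ K.mkQ K.mkQ_surjective)
  obtain ⟨φ, hφ⟩ : ∃ φ : Z →ₗ[R] E ⧸ K, φ ∘ₗ p = K.mkQ ∘ₗ i :=
    (exact_subtype_ker_map p).exists_comp_eq_of_comp_eq_zero (M := ker p) hp <| by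
      ext x
      simpa [K] using Submodule.mem_map_of_mem (f := i) x.2
  obtain ⟨ψ, rfl⟩ := hY φ
  obtain ⟨w, hw⟩ := Module.projective_lifting_property K.mkQ ψ K.mkQ_surjective
  obtain ⟨σ, hσ⟩ := exists_comp_eq_id_of_mkQ_comp_eq hp hi (s := w ∘ₗ f)
    (by rw [← hφ, ← hw]; rfl)
  exact Module.Projective.of_split σ p hσ

end Ext

theorem stmt7 (R : Type) [Ring R] :
    (∀ X : ModuleCat.{0} R, AbsolutelyPure X →
      ∀ (Y : ModuleCat.{0} R) (g : X →ₗ[R] Y), Function.Surjective g → AbsolutelyPure Y) ↔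
    (∀ (Z U V : ModuleCat.{0} R) (f : Z →ₗ[R] U) (g : U →ₗ[R] V),
      Function.Injective f → Function.Surjective g → Function.Exact f g →
      Module.FinitePresentation R V → Module.Projective R U → Module.Projective R Z) := by
  constructor
  · intro hquot Z U V f g hf hg hfg hV hU
    exact projective_of_subsingleton_ext1 hf hfg hg fun E _ Y q hq =>
      hquot E (fun _ _ => subsingleton_ext1_of_injective E) Y q hq V hV
  · intro hsemi X hX Y q hq F hF
    let p := Finsupp.linearCombination R (id : F → F)
    have hp := Finsupp.linearCombination_id_surjective R F
    have hZ := hsemi (.of R (ker p)) (.of R (F →₀ R)) F _ p (ker p).injective_subtype hp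
      (exact_subtype_ker_map p) hF inferInstance
    exact subsingleton_ext1_of_surjective (Z := .of R (ker p)) (U := .of R (F →₀ R))
      (ker p).injective_subtype (exact_subtype_ker_map p) hp hq (hX F hF)
end

section
/- Let R be a ring and N a 2-presented right R-module (there is an exact sequence F₂ → F₁ → F₀ → N → 0 with F₀, F₁, F₂ finitely generated free). Then for every family (Z_i) of left R-modules, the natural map Tor₁^R(N, ∏ Z_i) → ∏ Tor₁^R(N, Z_i) is an isomorphism. -/
open CategoryTheory

/-- A module `N` is 2-presented if there is an exact sequence
`F₂ → F₁ → F₀ → N → 0` with `F₀, F₁, F₂` finitely generated free. -/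
def TwoPresented (R : Type) [Ring R] (N : Type) [AddCommGroup N] [Module R N] : Prop :=
  ∃ (n₀ n₁ n₂ : ℕ) (f₂ : (Fin n₂ → R) →ₗ[R] (Fin n₁ → R))
    (f₁ : (Fin n₁ → R) →ₗ[R] (Fin n₀ → R)) (f₀ : (Fin n₀ → R) →ₗ[R] N),
    Function.Surjective f₀ ∧ Function.Exact f₁ f₀ ∧ Function.Exact f₂ f₁

/-
Present `N` as `0 → K → F → N → 0` with `F = Rⁿ⁰` free and `K` finitely presented by
`F₂ → F₁ → K → 0`. As `F` is flat, the long exact `Tor` sequence identifies `Tor₁(N, W)` with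
`ker(K ⊗ W → F ⊗ W)`, naturally in `W`. Tensoring with a finitely presented module commutes with
products (true for finite free modules, then by right exactness), so for `W = ∏ Zᵢ` this kernel
is the product of the kernels for the `Zᵢ`.
-/

open TensorProduct

section PiRightHom

variable {R : Type*} [CommRing R] {ι : Type*} (Z : ι → Type*)
  [∀ i, AddCommGroup (Z i)] [∀ i, Module R (Z i)]

lemma TensorProduct.piRightHom_apply_eq_lTensor_proj {M : Type*} [AddCommGroup M] [Module R M]
    (x : M ⊗[R] (∀ i, Z i)) (i : ι) :
    piRightHom R R M Z x i = (LinearMap.proj i).lTensor M x :=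
  LinearMap.congr_fun (TensorProduct.ext' fun _ _ ↦ rfl :
    (LinearMap.proj i).comp (piRightHom R R M Z) = (LinearMap.proj i).lTensor M) x

lemma TensorProduct.piRightHom_rTensor {A B : Type*} [AddCommGroup A] [Module R A]
    [AddCommGroup B] [Module R B] (f : A →ₗ[R] B) (x : A ⊗[R] (∀ i, Z i)) (i : ι) :
    piRightHom R R B Z (f.rTensor _ x) i = f.rTensor (Z i) (piRightHom R R A Z x i) := by
  simp only [piRightHom_apply_eq_lTensor_proj, ← LinearMap.comp_apply,
    LinearMap.lTensor_comp_rTensor, LinearMap.rTensor_comp_lTensor]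

lemma TensorProduct.piRightHom_bijective_of_fintype (κ : Type*) [Fintype κ] :
    Function.Bijective (piRightHom R R (κ → R) Z) := by
  classical
  let e := TensorProduct.comm R (κ → R) (∀ i, Z i) ≪≫ₗ piScalarRight R R (∀ i, Z i) κ
  let e' i := TensorProduct.comm R (κ → R) (Z i) ≪≫ₗ piScalarRight R R (Z i) κ
  let E := e.toEquiv.trans
    ((Equiv.piComm _).trans (Equiv.piCongrRight fun i ↦ (e' i).symm.toEquiv))
  have hcoord (i : ι) (x) : e' i (piRightHom R R (κ → R) Z x i) = fun j ↦ e x j i := by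
    induction x using TensorProduct.induction_on with
    | zero => ext; simp
    | tmul v z => ext; simp [e, e']
    | add a b ha hb => ext j; simp only [map_add, Pi.add_apply, ha, hb]
  convert E.bijective
  ext x i
  exact ((e' i).eq_symm_apply).mpr (hcoord i x)

lemma TensorProduct.piRightHom_bijective_of_exact {A₁ A₀ M : Type*} [AddCommGroup A₁]
    [Module R A₁] [AddCommGroup A₀] [Module R A₀] [AddCommGroup M] [Module R M]
    {f : A₁ →ₗ[R] A₀} {g : A₀ →ₗ[R] M} (hfg : Function.Exact f g) (hg : Function.Surjective g)
    (h₁ : Function.Surjective (piRightHom R R A₁ Z))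
    (h₀ : Function.Bijective (piRightHom R R A₀ Z)) :
    Function.Bijective (piRightHom R R M Z) := by
  refine ⟨(injective_iff_map_eq_zero _).mpr fun x hx ↦ ?_, fun u ↦ ?_⟩
  · obtain ⟨y, rfl⟩ := g.rTensor_surjective _ hg x
    have (i : ι) : ∃ v, f.rTensor (Z i) v = piRightHom R R A₀ Z y i := by
      refine (rTensor_exact (Z i) hfg hg _).mp ?_
      rw [← piRightHom_rTensor, hx, Pi.zero_apply]
    choose v hv using this
    obtain ⟨w, rfl⟩ := h₁ v
    obtain rfl : f.rTensor _ w = y := h₀.1 <| funext fun i ↦ by rw [piRightHom_rTensor, hv]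
    rw [← LinearMap.rTensor_comp_apply, hfg.linearMap_comp_eq_zero, LinearMap.rTensor_zero,
      LinearMap.zero_apply]
  · choose w hw using fun i ↦ g.rTensor_surjective (Z i) hg (u i)
    obtain ⟨x, hx⟩ := h₀.2 w
    exact ⟨g.rTensor _ x, funext fun i ↦ by rw [piRightHom_rTensor, hx, hw]⟩

end PiRightHom

open CategoryTheory MonoidalCategory Limits HomologicalComplex

universe u

noncomputable section TensorResolution

variable {R : Type u} [CommRing R]

/- `Tor` derives `M ⊗ -` in the second variable, so `Torₙ(M, W)` is the homology of `M ⊗ P` for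
a projective resolution `P` of `W`. The `Pₙ` are flat, so a short exact sequence in `M` gives a
short exact sequence of these complexes: this yields the long exact sequence in the first
variable. -/
abbrev tensorResolution (M W : ModuleCat.{u} R) : ChainComplex (ModuleCat.{u} R) ℕ :=
  (((tensoringLeft _).obj M).mapHomologicalComplex _).obj (projectiveResolution W).complex

abbrev tensorResolutionMap {M M' : ModuleCat.{u} R} (f : M ⟶ M') (W : ModuleCat.{u} R) :
    tensorResolution M W ⟶ tensorResolution M' W :=
  (NatTrans.mapHomologicalComplex ((tensoringLeft _).map f) _).app (projectiveResolution W).complex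

instance {W : ModuleCat.{u} R} (P : ProjectiveResolution W) (n : ℕ) :
    Module.Flat R (P.complex.X n) := by
  have : Module.Projective R (P.complex.X n) :=
    (IsProjective.iff_projective _).mpr (P.projective n)
  infer_instance

lemma CategoryTheory.ProjectiveResolution.exact_d_two_one {W : ModuleCat.{u} R}
    (P : ProjectiveResolution W) :
    Function.Exact (P.complex.d 2 1) (P.complex.d 1 0) := by
  have h := P.complex_exactAt_succ 0
  rwa [exactAt_iff' _ 2 1 0 (by simp) (by simp),
    ShortComplex.ShortExact.moduleCat_exact_iff_function_exact] at h

lemma isZero_homology_one_tensorResolution (F W : ModuleCat.{u} R) [Module.Flat R F] :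
    IsZero ((tensorResolution F W).homology 1) := by
  rw [← exactAt_iff_isZero_homology, exactAt_iff' _ 2 1 0 (by simp) (by simp),
    ShortComplex.ShortExact.moduleCat_exact_iff_function_exact]
  exact Module.Flat.lTensor_exact F (projectiveResolution W).exact_d_two_one

abbrev tensorResolutionShortComplex (S : ShortComplex (ModuleCat.{u} R)) (W : ModuleCat.{u} R) :
    ShortComplex (ChainComplex (ModuleCat.{u} R) ℕ) :=
  ShortComplex.mk (tensorResolutionMap S.f W) (tensorResolutionMap S.g W) (by
    rw [← NatTrans.comp_app, ← NatTrans.mapHomologicalComplex_comp, ← Functor.map_comp, S.zero,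
      Functor.map_zero]
    rfl)

def tensorResolutionShortComplexMap (S : ShortComplex (ModuleCat.{u} R)) {W W' : ModuleCat.{u} R}
    (g : W ⟶ W') : tensorResolutionShortComplex S W ⟶ tensorResolutionShortComplex S W' :=
  let φ := ProjectiveResolution.lift g (projectiveResolution W) (projectiveResolution W')
  { τ₁ := (((tensoringLeft _).obj S.X₁).mapHomologicalComplex _).map φ
    τ₂ := (((tensoringLeft _).obj S.X₂).mapHomologicalComplex _).map φ
    τ₃ := (((tensoringLeft _).obj S.X₃).mapHomologicalComplex _).map φ
    comm₁₂ := NatTrans.mapHomologicalComplex_naturality ((tensoringLeft _).map S.f) φ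
    comm₂₃ := NatTrans.mapHomologicalComplex_naturality ((tensoringLeft _).map S.g) φ }

variable {S : ShortComplex (ModuleCat.{u} R)}

lemma shortExact_tensorResolutionShortComplex (hS : S.ShortExact) (W : ModuleCat.{u} R) :
    (tensorResolutionShortComplex S W).ShortExact := by
  rw [shortExact_iff_degreewise_shortExact]
  intro n
  apply ModuleCat.shortComplex_shortExact
  · exact rTensor_exact _ ((ShortComplex.ShortExact.moduleCat_exact_iff_function_exact S).mp
      hS.exact) hS.moduleCat_surjective_g
  · exact Module.Flat.rTensor_preserves_injective_linearMap _ hS.moduleCat_injective_f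
  · exact LinearMap.rTensor_surjective _ hS.moduleCat_surjective_g

def tensorResolutionHomologyZeroIso (M W : ModuleCat.{u} R) :
    (tensorResolution M W).homology 0 ≅ M ⊗ W :=
  have : PreservesFiniteColimits ((tensoringLeft (ModuleCat.{u} R)).obj M) :=
    PreservesColimits.preservesFiniteColimits (tensorLeft M)
  (ChainComplex.isoHomologyι₀ _) ≪≫ asIso ((projectiveResolution W).fromLeftDerivedZero' _)

lemma tensorResolutionHomologyZeroIso_hom_naturality_left {M M' : ModuleCat.{u} R} (f : M ⟶ M')
    (W : ModuleCat.{u} R) :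
    homologyMap (tensorResolutionMap f W) 0 ≫ (tensorResolutionHomologyZeroIso M' W).hom =
      (tensorResolutionHomologyZeroIso M W).hom ≫ f ▷ W := by
  dsimp [tensorResolutionHomologyZeroIso]
  simp only [ChainComplex.isoHomologyι₀, isoHomologyι_hom]
  rw [homologyι_naturality_assoc, Category.assoc, cancel_epi,
    ← cancel_epi ((tensorResolution M W).pOpcycles 0), p_opcyclesMap_assoc,
    ProjectiveResolution.pOpcycles_comp_fromLeftDerivedZero',
    ProjectiveResolution.pOpcycles_comp_fromLeftDerivedZero'_assoc]
  exact (((tensoringLeft _).map f).naturality _).symm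

lemma tensorResolutionHomologyZeroIso_hom_naturality_right (M : ModuleCat.{u} R)
    {W W' : ModuleCat.{u} R} (g : W ⟶ W') :
    homologyMap ((((tensoringLeft _).obj M).mapHomologicalComplex _).map
        (ProjectiveResolution.lift g (projectiveResolution W) (projectiveResolution W'))) 0 ≫
        (tensorResolutionHomologyZeroIso M W').hom =
      (tensorResolutionHomologyZeroIso M W).hom ≫ M ◁ g := by
  dsimp [tensorResolutionHomologyZeroIso]
  simp only [ChainComplex.isoHomologyι₀, isoHomologyι_hom]
  rw [homologyι_naturality_assoc, Category.assoc, cancel_epi]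
  exact ProjectiveResolution.fromLeftDerivedZero'_naturality g _ _ _
    (ProjectiveResolution.lift_commutes_zero _ _ _) _

def torIsoHomologyTensorResolution (n : ℕ) (M W : ModuleCat.{u} R) :
    ((Tor (ModuleCat.{u} R) n).obj M).obj W ≅ (tensorResolution M W).homology n :=
  (projectiveResolution W).isoLeftDerivedObj _ n


def torOneToTensor (hS : S.ShortExact) (W : ModuleCat.{u} R) :
    ((Tor (ModuleCat.{u} R) 1).obj S.X₃).obj W ⟶ S.X₁ ⊗ W :=
  (torIsoHomologyTensorResolution 1 S.X₃ W).hom ≫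
    (shortExact_tensorResolutionShortComplex hS W).δ 1 0 rfl ≫
    (tensorResolutionHomologyZeroIso S.X₁ W).hom

lemma exact_torOneToTensor (hS : S.ShortExact) (W : ModuleCat.{u} R) :
    Function.Exact (torOneToTensor hS W) (S.f ▷ W) := by
  have hδ := (shortExact_tensorResolutionShortComplex hS W).homology_exact₁ 1 0 rfl
  rw [ShortComplex.ShortExact.moduleCat_exact_iff_function_exact] at hδ
  refine Function.Exact.of_ladder_linearEquiv_of_exact
    (e₁ := (torIsoHomologyTensorResolution 1 S.X₃ W).symm.toLinearEquiv)
    (e₂ := (tensorResolutionHomologyZeroIso S.X₁ W).toLinearEquiv)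
    (e₃ := (tensorResolutionHomologyZeroIso S.X₂ W).toLinearEquiv) ?_ ?_ hδ
  · have : (torIsoHomologyTensorResolution 1 S.X₃ W).inv ≫ torOneToTensor hS W =
        (shortExact_tensorResolutionShortComplex hS W).δ 1 0 rfl ≫
          (tensorResolutionHomologyZeroIso S.X₁ W).hom := by
      rw [torOneToTensor, Iso.inv_hom_id_assoc]
    exact congrArg ModuleCat.Hom.hom this
  · exact congrArg ModuleCat.Hom.hom
      (tensorResolutionHomologyZeroIso_hom_naturality_left S.f W).symm

lemma injective_torOneToTensor (hS : S.ShortExact) [Module.Flat R S.X₂] (W : ModuleCat.{u} R) :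
    Function.Injective (torOneToTensor hS W) := by
  have : Mono ((shortExact_tensorResolutionShortComplex hS W).δ 1 0 rfl) :=
    ((shortExact_tensorResolutionShortComplex hS W).homology_exact₃ 1 0 rfl).mono_g
      ((isZero_homology_one_tensorResolution S.X₂ W).eq_of_src _ _)
  rw [torOneToTensor, ← ModuleCat.mono_iff_injective]
  infer_instance

lemma torOneToTensor_naturality (hS : S.ShortExact) {W W' : ModuleCat.{u} R} (g : W ⟶ W') :
    ((Tor (ModuleCat.{u} R) 1).obj S.X₃).map g ≫ torOneToTensor hS W' =
      torOneToTensor hS W ≫ S.X₁ ◁ g := by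
  have hα : ((Tor (ModuleCat.{u} R) 1).obj S.X₃).map g ≫
      (torIsoHomologyTensorResolution 1 S.X₃ W').hom =
        (torIsoHomologyTensorResolution 1 S.X₃ W).hom ≫
        homologyMap (tensorResolutionShortComplexMap S g).τ₃ 1 :=
    ProjectiveResolution.isoLeftDerivedObj_hom_naturality g _ _ _
      (ProjectiveResolution.lift_commutes_zero g _ _) _ 1
  have hδ := HomologySequence.δ_naturality (tensorResolutionShortComplexMap S g)
    (shortExact_tensorResolutionShortComplex hS W)
    (shortExact_tensorResolutionShortComplex hS W') 1 0 rfl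
  have hβ : homologyMap (tensorResolutionShortComplexMap S g).τ₁ 0 ≫
      (tensorResolutionHomologyZeroIso S.X₁ W').hom =
        (tensorResolutionHomologyZeroIso S.X₁ W).hom ≫ S.X₁ ◁ g :=
    tensorResolutionHomologyZeroIso_hom_naturality_right S.X₁ g
  simp only [torOneToTensor, Category.assoc]
  rw [reassoc_of% hα, ← reassoc_of% hδ, hβ]

variable {ι : Type u} (Z : ι → Type u) [∀ i, AddCommGroup (Z i)] [∀ i, Module R (Z i)]

lemma torOneToTensor_map_proj (hS : S.ShortExact)
    (x : ((Tor (ModuleCat.{u} R) 1).obj S.X₃).obj (ModuleCat.of R (∀ i, Z i))) (i : ι) :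
    torOneToTensor hS _ (((Tor (ModuleCat.{u} R) 1).obj S.X₃).map
        (ModuleCat.ofHom (LinearMap.proj i : (∀ j, Z j) →ₗ[R] Z i)) x) =
      piRightHom R R S.X₁ Z (torOneToTensor hS _ x) i := by
  rw [piRightHom_apply_eq_lTensor_proj]
  exact ConcreteCategory.congr_hom (torOneToTensor_naturality hS _) x

theorem torOne_pi_bijective_of_shortExact (hS : S.ShortExact) [Module.Flat R S.X₂]
    (h₁ : Function.Bijective (piRightHom R R S.X₁ Z))
    (h₂ : Function.Injective (piRightHom R R S.X₂ Z)) :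
    Function.Bijective
      (fun (x : ((Tor (ModuleCat.{u} R) 1).obj S.X₃).obj (ModuleCat.of R (∀ i, Z i))) (i : ι) ↦
        (((Tor (ModuleCat.{u} R) 1).obj S.X₃).map
          (ModuleCat.ofHom (LinearMap.proj i : (∀ j, Z j) →ₗ[R] Z i)) x :
          ((Tor (ModuleCat.{u} R) 1).obj S.X₃).obj (ModuleCat.of R (Z i)))) := by
  have hu := injective_torOneToTensor hS
  refine ⟨fun x y hxy ↦ hu _ <| h₁.1 <| funext fun i ↦ ?_, fun t ↦ ?_⟩
  · rw [← torOneToTensor_map_proj, ← torOneToTensor_map_proj]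
    exact congrArg _ (congrFun hxy i)
  · obtain ⟨s, hs⟩ := h₁.2 fun i ↦ torOneToTensor hS _ (t i)
    obtain ⟨x, rfl⟩ : ∃ x, torOneToTensor hS _ x = s := by
      refine (exact_torOneToTensor hS (.of R (∀ i, Z i)) s).mp (h₂ <| funext fun i ↦ ?_)
      change piRightHom R R S.X₂ Z (S.f.hom.rTensor _ s) i = piRightHom R R S.X₂ Z 0 i
      rw [piRightHom_rTensor, hs, map_zero]
      exact (exact_torOneToTensor hS _).apply_apply_eq_zero (t i)
    exact ⟨x, funext fun i ↦ hu _ <| by rw [torOneToTensor_map_proj, hs]⟩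

end TensorResolution

theorem stmt8 (R : Type) [CommRing R] (N : Type) [AddCommGroup N] [Module R N]
    (hN : TwoPresented R N) (ι : Type) (Z : ι → Type)
    [∀ i, AddCommGroup (Z i)] [∀ i, Module R (Z i)] :
    Function.Bijective
      (fun (x : tor1 (ModuleCat.of R N) (ModuleCat.of R (∀ i, Z i))) (i : ι) =>
        (((Tor (ModuleCat.{0} R) 1).obj (ModuleCat.of R N)).map
          (ModuleCat.ofHom (LinearMap.proj i : (∀ j, Z j) →ₗ[R] Z i)) x :
          tor1 (ModuleCat.of R N) (ModuleCat.of R (Z i)))) := by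
  obtain ⟨n₀, n₁, n₂, f₂, f₁, f₀, hf₀, hf₁₀, hf₂₁⟩ := hN
  let f₁' := f₁.codRestrict (LinearMap.ker f₀) hf₁₀.apply_apply_eq_zero
  have hf₁' : Function.Surjective f₁' := fun ⟨y, hy⟩ ↦
    let ⟨x, hx⟩ := (hf₁₀ y).mp hy; ⟨x, Subtype.ext hx⟩
  have hf₂₁' : Function.Exact f₂ f₁' :=
    ((LinearMap.ker f₀).injective_subtype.comp_exact_iff_exact (f := f₂) (g := f₁')).mp hf₂₁
  exact torOne_pi_bijective_of_shortExact Z (f₀.shortExact_shortComplexKer hf₀)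
    (piRightHom_bijective_of_exact Z hf₂₁' hf₁' (piRightHom_bijective_of_fintype Z _).2
      (piRightHom_bijective_of_fintype Z _))
    (piRightHom_bijective_of_fintype Z _).1
end

section
/- Let R be a ring and N a class of finitely presented right R-modules. Suppose that for every direct system (X_i) of right R-modules with each X_i satisfying Ext¹_R(N, X_i) = 0 for all N ∈ N, also Ext¹_R(N, colim X_i) = 0 for all N ∈ N. Then every N ∈ N is 2-presented, i.e., R is right N-coherent. -/
open CategoryTheory

/-!
Choose `0 → K → F₀ → N → 0` with `F₀` finitely generated free. As `N` is finitely presented, `K`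
is the image of some `g : G → F₀` with `G` finitely generated free, and it remains to show that
`S = ker g` is finitely generated.

Index a direct system by the finitely generated submodules `p ≤ S`, putting `E^Hom(G/p, E)` at `p`,
with `E` an injective module into which every quotient of `G` embeds; `G/p` embeds in it by
evaluation. The map `G → colim` is zero on `S`, so it comes from `K`. Every term is injective, so by
hypothesis `Ext¹(N, colim) = 0` and the map extends from `K` to `F₀`. As `F₀` and `G` are finitely
generated free, this extension, and the agreement of the two resulting maps `G → colim`, are
already witnessed at one stage `p`. There, `G/p → E^Hom(G/p, E)` kills `S`, hence `S = p`.
-/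

universe v

theorem LinearMap.exists_comp_eq_of_surjective {R M M' X : Type*} [Ring R] [AddCommGroup M]
    [Module R M] [AddCommGroup M'] [Module R M'] [AddCommGroup X] [Module R X]
    {p : M →ₗ[R] M'} (hp : Function.Surjective p) {q : M →ₗ[R] X} (h : ker p ≤ ker q) :
    ∃ r : M' →ₗ[R] X, r ∘ₗ p = q :=
  ⟨(ker p).liftQ q h ∘ₗ (p.quotKerEquivOfSurjective hp).symm.toLinearMap, by
    ext x; simp [quotKerEquivOfSurjective_symm_apply]⟩

def Submodule.ExtensionProperty {R M : Type*} [Ring R] [AddCommGroup M] [Module R M]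
    (K : Submodule R M) (X : Type*) [AddCommGroup X] [Module R X] : Prop :=
  ∀ u : K →ₗ[R] X, ∃ v : M →ₗ[R] X, v ∘ₗ K.subtype = u

section ExtensionProperty

open LinearMap (ker range)

variable {R : Type*} [Ring R]

theorem Submodule.extensionProperty_of_injective {M : Type*} {X : Type v} [AddCommGroup M]
    [Module R M] [AddCommGroup X] [Module R X] [Small.{v} R] [Module.Injective R X]
    (K : Submodule R M) : K.ExtensionProperty X := fun u =>
  Module.Injective.extension_property R X K M K.subtype K.injective_subtype u

theorem Submodule.ExtensionProperty.exists_comp_eq_of_ker_le {G F X : Type*} [AddCommGroup G]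
    [Module R G] [AddCommGroup F] [Module R F] [AddCommGroup X] [Module R X] {g : G →ₗ[R] F}
    (hext : (range g).ExtensionProperty X) {q : G →ₗ[R] X} (h : ker g ≤ ker q) :
    ∃ v : F →ₗ[R] X, v ∘ₗ g = q := by
  obtain ⟨u, hu⟩ := LinearMap.exists_comp_eq_of_surjective (q := q) g.surjective_rangeRestrict
    (by rwa [LinearMap.ker_rangeRestrict])
  obtain ⟨v, hv⟩ := hext u
  exact ⟨v, by rw [← hu, ← hv]; rfl⟩

theorem Function.Exact.extensionProperty_ker_iff {P₂ P₁ P₀ N X : Type*} [AddCommGroup P₂]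
    [Module R P₂] [AddCommGroup P₁] [Module R P₁] [AddCommGroup P₀] [Module R P₀]
    [AddCommGroup N] [Module R N] [AddCommGroup X] [Module R X]
    {d₂ : P₂ →ₗ[R] P₁} {d₁ : P₁ →ₗ[R] P₀} {ε : P₀ →ₗ[R] N}
    (h₂ : Function.Exact d₂ d₁) (h₁ : Function.Exact d₁ ε) :
    (ker ε).ExtensionProperty X ↔
      ∀ g : P₁ →ₗ[R] X, g ∘ₗ d₂ = 0 → ∃ h : P₀ →ₗ[R] X, h ∘ₗ d₁ = g := by
  let d : P₁ →ₗ[R] ker ε := d₁.codRestrict (ker ε) fun y => h₁.apply_apply_eq_zero y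
  have hd : Function.Surjective d := fun ⟨k, hk⟩ => by
    obtain ⟨y, rfl⟩ := (h₁ k).mp hk
    exact ⟨y, rfl⟩
  constructor
  · intro hext g hg
    have hker : ker d ≤ ker g := fun y hy => by
      obtain ⟨z, rfl⟩ := (h₂ y).mp (congrArg Subtype.val hy)
      exact congr($hg z)
    obtain ⟨u, rfl⟩ := LinearMap.exists_comp_eq_of_surjective hd hker
    obtain ⟨h, rfl⟩ := hext u
    exact ⟨h, rfl⟩
  · intro hfac u
    obtain ⟨h, hh⟩ := hfac (u ∘ₗ d) (by
      ext z
      simp [show d (d₂ z) = 0 from Subtype.ext (h₂.apply_apply_eq_zero z)])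
    refine ⟨h, ?_⟩
    ext k
    obtain ⟨y, hy⟩ := hd k
    rw [← hy]
    exact congr($hh y)

theorem Submodule.ExtensionProperty.ker_of_projective {P F N X : Type*} [AddCommGroup P]
    [Module R P] [AddCommGroup F] [Module R F] [AddCommGroup N] [Module R N] [AddCommGroup X]
    [Module R X] [Module.Projective R P] [Module.Projective R F] {ε : P →ₗ[R] N}
    {f : F →ₗ[R] N} (hε : Function.Surjective ε) (hf : Function.Surjective f)
    (hext : (ker ε).ExtensionProperty X) : (ker f).ExtensionProperty X := by
  obtain ⟨α, hα⟩ := Module.projective_lifting_property f ε hf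
  obtain ⟨β, hβ⟩ := Module.projective_lifting_property ε f hε
  intro u
  let αK : ker ε →ₗ[R] ker f := α.restrict fun x hx => by
    simpa [LinearMap.mem_ker, ← hα] using hx
  obtain ⟨h, hh⟩ := hext (u ∘ₗ αK)
  -- `x ↦ α (β x) - x` lands in `ker f` because both `α` and `β` lie over `N`
  let ρ : F →ₗ[R] ker f := (α ∘ₗ β - LinearMap.id).codRestrict (ker f) fun x => by
    simp [← LinearMap.comp_apply f α, hα, ← LinearMap.comp_apply ε β, hβ]
  refine ⟨h ∘ₗ β - u ∘ₗ ρ, ?_⟩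
  ext ⟨k, hk⟩
  have hβk : β k ∈ ker ε := by simpa [← LinearMap.comp_apply ε β, hβ] using hk
  have hhβk : h (β k) = u (αK ⟨β k, hβk⟩) := congr($hh ⟨β k, hβk⟩)
  simp only [LinearMap.sub_apply, LinearMap.comp_apply, Submodule.subtype_apply, hhβk,
    ← map_sub]
  congr 1
  ext
  simp [αK, ρ]

end ExtensionProperty

section Ext

variable {R : Type} [Ring R]

theorem subsingleton_ext1_iff_s10 {N X : ModuleCat.{0} R} (P : ProjectiveResolution N) :
    Subsingleton (ext1 N X) ↔
      ∀ g : P.complex.X 1 ⟶ X, P.complex.d 2 1 ≫ g = 0 → ∃ h, P.complex.d 1 0 ≫ h = g := by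
  rw [← ModuleCat.isZero_iff_subsingleton, Iso.isZero_iff (P.isoExt 1 X),
    ← HomologicalComplex.exactAt_iff_isZero_homology,
    HomologicalComplex.exactAt_iff' _ 0 1 2 (by simp) (by simp),
    ShortComplex.moduleCat_exact_iff]
  rfl

theorem subsingleton_ext1_iff_extensionProperty {N X : ModuleCat.{0} R}
    (P : ProjectiveResolution N) :
    Subsingleton (ext1 N X) ↔ (LinearMap.ker (P.π.f 0).hom).ExtensionProperty X := by
  have exact₁ := (ShortComplex.ShortExact.moduleCat_exact_iff_function_exact _).mp P.exact₀
  have exact₂ :=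
    (ShortComplex.ShortExact.moduleCat_exact_iff_function_exact _).mp (P.exact_succ 0)
  rw [subsingleton_ext1_iff_s10 P, exact₂.extensionProperty_ker_iff exact₁]
  constructor
  · intro H g hg
    obtain ⟨h, hh⟩ := H (ModuleCat.ofHom g) (by ext z; exact congr($hg z))
    exact ⟨h.hom, congr(($hh).hom)⟩
  · intro H g hg
    obtain ⟨h, hh⟩ := H g.hom congr(($hg).hom)
    exact ⟨ModuleCat.ofHom h, by ext z; exact congr($hh z)⟩

theorem subsingleton_ext1_of_injective_s10 (N : ModuleCat.{0} R) (X : Type) [AddCommGroup X]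
    [Module R X] [Module.Injective R X] : Subsingleton (ext1 N (ModuleCat.of R X)) := by
  obtain ⟨P⟩ := HasProjectiveResolution.out (Z := N)
  exact (subsingleton_ext1_iff_extensionProperty P).mpr
    (Submodule.extensionProperty_of_injective _)

theorem extensionProperty_ker_of_subsingleton_ext1 {N X : ModuleCat.{0} R}
    (hX : Subsingleton (ext1 N X)) {F : Type} [AddCommGroup F] [Module R F]
    [Module.Projective R F] {f : F →ₗ[R] N} (hf : Function.Surjective f) :
    (LinearMap.ker f).ExtensionProperty X := by
  obtain ⟨P⟩ := HasProjectiveResolution.out (Z := N)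
  exact ((subsingleton_ext1_iff_extensionProperty P).mp hX).ker_of_projective
    ((ModuleCat.epi_iff_surjective (P.π.f 0)).mp inferInstance) hf

end Ext

namespace Module.DirectLimit

variable {R : Type*} [Ring R] {ι : Type*} [Preorder ι] [IsDirectedOrder ι] [DecidableEq ι]
  {G : ι → Type*} [∀ i, AddCommGroup (G i)] [∀ i, Module R (G i)]
  {f : ∀ i j, i ≤ j → G i →ₗ[R] G j}

theorem exists_of_comp_eq [Nonempty ι] {F : Type*} [AddCommGroup F] [Module R F]
    [Module.Free R F] [Module.Finite R F] (v : F →ₗ[R] DirectLimit G f) :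
    ∃ (j : ι) (w : F →ₗ[R] G j), of R ι G f j ∘ₗ w = v := by
  let b := Module.Free.chooseBasis R F
  choose i x hx using fun k => exists_of (v (b k))
  obtain ⟨j, hij⟩ := Finite.exists_le i
  refine ⟨j, b.constr ℕ fun k => f (i k) j (hij k) (x k), b.ext fun k => ?_⟩
  simp [hx]

theorem exists_comp_eq_of_of_comp_eq [DirectedSystem G fun i j h => f i j h] {M : Type*}
    [AddCommGroup M] [Module R M] [Module.Finite R M] {i : ι} {a b : M →ₗ[R] G i}
    (h : of R ι G f i ∘ₗ a = of R ι G f i ∘ₗ b) :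
    ∃ (j : ι) (hij : i ≤ j), f i j hij ∘ₗ a = f i j hij ∘ₗ b := by
  have : Nonempty ι := ⟨i⟩
  obtain ⟨s, hs⟩ := Module.Finite.fg_top (R := R) (M := M)
  choose j hij hj using fun x : s => exists_eq_of_of_eq congr($h x)
  obtain ⟨k₀, hk₀⟩ := Finite.exists_le j
  obtain ⟨k, hik, hk₀k⟩ := exists_ge_ge i k₀
  refine ⟨k, hik, LinearMap.ext_on hs fun x hx => ?_⟩
  have hjk := (hk₀ ⟨x, hx⟩).trans hk₀k
  simpa [DirectedSystem.map_map'] using congr(f _ k hjk $(hj ⟨x, hx⟩))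

end Module.DirectLimit

section EvalSystem

variable (R : Type*) [Ring R] (E : Type*) [AddCommGroup E] [Module R E]

def evalEmbedding (Q : Type*) [AddCommGroup Q] [Module R Q] : Q →ₗ[R] (Q →ₗ[R] E) → E :=
  LinearMap.pi fun χ => χ

variable {R E}

theorem evalEmbedding_injective {Q : Type*} [AddCommGroup Q] [Module R Q] {χ : Q →ₗ[R] E}
    (hχ : Function.Injective χ) : Function.Injective (evalEmbedding R E Q) :=
  fun _ _ h => hχ (congrFun h χ)

variable (E) {G : Type*} [AddCommGroup G] [Module R G] {ι : Type*} [Preorder ι]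
  (p : ι → Submodule R G)

/- Unlike injective envelopes, `Q ↦ E^Hom(Q, E)` is a functor, so it turns the quotients `G ⧸ p i`
into a directed system of injective modules when `E` is injective. -/
abbrev evalSystem (i : ι) : Type _ := (G ⧸ p i →ₗ[R] E) → E

variable {p}

def evalSystemMap (hp : Monotone p) (i j : ι) (hij : i ≤ j) :
    evalSystem E p i →ₗ[R] evalSystem E p j :=
  LinearMap.funLeft R E (· ∘ₗ Submodule.factor (hp hij))

instance (hp : Monotone p) :
    DirectedSystem (evalSystem E p) fun i j h => evalSystemMap E hp i j h where
  map_self i φ := by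
    funext χ
    exact congrArg φ (by ext; simp)
  map_map k j i hij hjk φ := by
    funext χ
    exact congrArg φ (by ext; simp)

theorem evalSystemMap_evalEmbedding_mk (hp : Monotone p) {i j : ι} (hij : i ≤ j) (x : G) :
    evalSystemMap E hp i j hij (evalEmbedding R E _ (Submodule.Quotient.mk x)) =
      evalEmbedding R E _ (Submodule.Quotient.mk x) :=
  rfl

end EvalSystem

section DirectLimitOfEvalSystem

open Module.DirectLimit
open LinearMap (ker range)

variable {R : Type*} [Ring R] {E : Type*} [AddCommGroup E] [Module R E]
  {G : Type*} [AddCommGroup G] [Module R G] {ι : Type*} [Preorder ι] [IsDirectedOrder ι]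
  [DecidableEq ι] {p : ι → Submodule R G} (hp : Monotone p)

theorem of_evalEmbedding_mk_eq (i j : ι) (x : G) :
    of R ι _ (evalSystemMap E hp) i (evalEmbedding R E _ (Submodule.Quotient.mk x)) =
      of R ι _ (evalSystemMap E hp) j (evalEmbedding R E _ (Submodule.Quotient.mk x)) := by
  obtain ⟨k, hik, hjk⟩ := exists_ge_ge i j
  rw [← of_f (hij := hik), ← of_f (hij := hjk), evalSystemMap_evalEmbedding_mk,
    evalSystemMap_evalEmbedding_mk]

theorem exists_ker_le_of_extensionProperty [Nonempty ι] [Module.Finite R G] {F : Type*}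
    [AddCommGroup F] [Module R F] [Module.Free R F] [Module.Finite R F] {g : G →ₗ[R] F}
    (hE : ∀ i, ∃ χ : G ⧸ p i →ₗ[R] E, Function.Injective χ)
    (hker : ∀ x ∈ ker g, ∃ i, x ∈ p i)
    (hext : (range g).ExtensionProperty
      (Module.DirectLimit (evalSystem E p) (evalSystemMap E hp))) :
    ∃ j, ker g ≤ p j := by
  let ψ (i : ι) : G →ₗ[R] Module.DirectLimit (evalSystem E p) (evalSystemMap E hp) :=
    of R ι (evalSystem E p) (evalSystemMap E hp) i ∘ₗ evalEmbedding R E _ ∘ₗ (p i).mkQ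
  have hψ (i j : ι) : ψ i = ψ j := LinearMap.ext (of_evalEmbedding_mk_eq hp i j)
  obtain ⟨i₀⟩ := ‹Nonempty ι›
  have hψker : ker g ≤ ker (ψ i₀) := fun x hx => by
    obtain ⟨i, hi⟩ := hker x hx
    simp [hψ i₀ i, ψ, (Submodule.Quotient.mk_eq_zero _).mpr hi]
  obtain ⟨v, hv⟩ := hext.exists_comp_eq_of_ker_le hψker
  obtain ⟨j₀, w, rfl⟩ := exists_of_comp_eq v
  obtain ⟨j, hj₀j, hj⟩ := exists_comp_eq_of_of_comp_eq (a := w ∘ₗ g)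
    (b := evalEmbedding R E _ ∘ₗ (p j₀).mkQ) (by rw [← LinearMap.comp_assoc, hv, hψ])
  refine ⟨j, fun x hx => ?_⟩
  obtain ⟨χ, hχ⟩ := hE j
  have hx' : evalEmbedding R E _ (Submodule.Quotient.mk x : G ⧸ p j) = 0 := by
    simpa [LinearMap.mem_ker.mp hx, evalSystemMap_evalEmbedding_mk] using congr($hj x).symm
  exact (Submodule.Quotient.mk_eq_zero _).mp
    (evalEmbedding_injective hχ (hx'.trans (map_zero _).symm))

instance Submodule.isDirectedOrder_fg_le (S : Submodule R G) :
    IsDirectedOrder {p : Submodule R G // p.FG ∧ p ≤ S} where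
  directed p q := ⟨⟨p.1 ⊔ q.1, p.2.1.sup q.2.1, sup_le p.2.2 q.2.2⟩,
    Subtype.coe_le_coe.mp le_sup_left, Subtype.coe_le_coe.mp le_sup_right⟩

instance Submodule.nonempty_fg_le (S : Submodule R G) :
    Nonempty {p : Submodule R G // p.FG ∧ p ≤ S} :=
  ⟨⟨⊥, Submodule.fg_bot, bot_le⟩⟩

theorem fg_ker_of_extensionProperty [Module.Finite R G] {F : Type*} [AddCommGroup F]
    [Module R F] [Module.Free R F] [Module.Finite R F] {g : G →ₗ[R] F}
    [DecidableEq {p : Submodule R G // p.FG ∧ p ≤ ker g}]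
    (hE : ∀ p : Submodule R G, ∃ χ : G ⧸ p →ₗ[R] E, Function.Injective χ)
    (hext : (range g).ExtensionProperty (Module.DirectLimit
      (evalSystem E (Subtype.val : {p : Submodule R G // p.FG ∧ p ≤ ker g} → Submodule R G))
      (evalSystemMap E (Subtype.mono_coe _)))) :
    (ker g).FG := by
  obtain ⟨j, hj⟩ := exists_ker_le_of_extensionProperty (Subtype.mono_coe _) (fun i => hE i.1)
    (fun x hx => ⟨⟨_, Submodule.fg_span_singleton x,
      (Submodule.span_singleton_le_iff_mem x _).mpr hx⟩, Submodule.mem_span_singleton_self x⟩)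
    hext
  exact le_antisymm hj j.2.2 ▸ j.2.1

end DirectLimitOfEvalSystem

theorem exists_injective_embeddings {R : Type} [Ring R] {κ : Type} (Q : κ → Type)
    [∀ k, AddCommGroup (Q k)] [∀ k, Module R (Q k)] :
    ∃ E : ModuleCat.{0} R, Module.Injective R E ∧
      ∀ k, ∃ χ : Q k →ₗ[R] E, Function.Injective χ := by
  classical
  let A := ModuleCat.of R (∀ k, Q k)
  refine ⟨Injective.under A,
    Module.injective_module_of_injective_object R _ (inj := Injective.injective_under A),
    fun k => ⟨(Injective.ι A).hom ∘ₗ LinearMap.single R Q k, ?_⟩⟩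
  exact ((ModuleCat.mono_iff_injective _).mp inferInstance).comp (Pi.single_injective k)

theorem twoPresented_of_fg_ker {R : Type} [Ring R] {N : Type} [AddCommGroup N] [Module R N]
    {n₀ n₁ : ℕ} {f₀ : (Fin n₀ → R) →ₗ[R] N} (hf₀ : Function.Surjective f₀)
    {g : (Fin n₁ → R) →ₗ[R] (Fin n₀ → R)} (hg : Function.Exact g f₀)
    (hker : (LinearMap.ker g).FG) : TwoPresented R N := by
  have : Module.Finite R (LinearMap.ker g) := Module.Finite.iff_fg.mpr hker
  obtain ⟨n₂, h, hh⟩ := Module.Finite.exists_fin' R (LinearMap.ker g)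
  exact ⟨n₀, n₁, n₂, (LinearMap.ker g).subtype ∘ₗ h, g, f₀, hf₀, hg,
    hh.comp_exact_iff_exact.mpr (LinearMap.exact_subtype_ker_map g)⟩

theorem stmt10 (R : Type) [Ring R] (𝓝 : ModuleCat.{0} R → Prop)
    (hfp : ∀ N : ModuleCat.{0} R, 𝓝 N → Module.FinitePresentation R N)
    (H : ∀ (ι : Type) [Preorder ι] [IsDirected ι (· ≤ ·)] [DecidableEq ι] [Nonempty ι]
      (X : ι → Type) [∀ i, AddCommGroup (X i)] [∀ i, Module R (X i)]
      (f : ∀ i j, i ≤ j → X i →ₗ[R] X j) [DirectedSystem X (fun i j h => f i j h)],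
      (∀ i, ∀ N : ModuleCat.{0} R, 𝓝 N →
        Subsingleton (ext1 N (ModuleCat.of R (X i)))) →
      ∀ N : ModuleCat.{0} R, 𝓝 N →
        Subsingleton (ext1 N (ModuleCat.of R (Module.DirectLimit X f)))) :
    ∀ N : ModuleCat.{0} R, 𝓝 N → TwoPresented R N := by
  intro N hN
  have := hfp N hN
  obtain ⟨n₀, f₀, hf₀⟩ := Module.Finite.exists_fin' R N
  have : Module.Finite R (LinearMap.ker f₀) :=
    Module.Finite.iff_fg.mpr (Module.FinitePresentation.fg_ker f₀ hf₀)
  obtain ⟨n₁, g', hg'⟩ := Module.Finite.exists_fin' R (LinearMap.ker f₀)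
  have hexact : Function.Exact ((LinearMap.ker f₀).subtype ∘ₗ g') f₀ :=
    hg'.comp_exact_iff_exact.mpr (LinearMap.exact_subtype_ker_map f₀)
  obtain ⟨E, _, hE⟩ :=
    exists_injective_embeddings (R := R) fun p : Submodule R (Fin n₁ → R) => (Fin n₁ → R) ⧸ p
  classical
  refine twoPresented_of_fg_ker hf₀ hexact (fg_ker_of_extensionProperty hE ?_)
  rw [← hexact.linearMap_ker_eq]
  exact extensionProperty_ker_of_subsingleton_ext1
    (H _ _ _ (fun _ N _ => subsingleton_ext1_of_injective_s10 N _) N hN) hf₀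
end

section
/- Let R be a ring and N a class of finitely presented right R-modules. Suppose that for every family (Z_i) of left R-modules with Tor₁^R(N, Z_i) = 0 for all N ∈ N and all i, also Tor₁^R(N, ∏ Z_i) = 0 for all N ∈ N. Then every N ∈ N is 2-presented. -/
/-!
Write `N = Rⁿ ⧸ K`. As `Tor₁(N, R) = 0`, the hypothesis gives `Tor₁(N, R^I) = 0` for every `I`,
so `K ⊗ R^I → Rⁿ ⊗ R^I ≅ (Rⁿ)^I` is injective, and hence so is the canonical map
`K ⊗ R^I → K^I`. For finitely generated `K` this forces `K` to be finitely presented (Lenzing):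
if `g : Rᵐ → K` is onto with kernel `L`, the element of `Rᵐ ⊗ R^L` corresponding to the inclusion
`L → Rᵐ` vanishes in `K ⊗ R^L`, so it comes from `L ⊗ R^L`, and the finitely many left tensor
factors of a preimage generate `L`. A finite presentation of `K` extends `Rⁿ → N` to a
2-presentation.
-/

open CategoryTheory

open TensorProduct LinearMap

universe u v

namespace TensorProduct

variable {R : Type*} [CommSemiring R]

theorem piScalarRightHom_rTensor {M N : Type*} [AddCommMonoid M] [Module R M]
    [AddCommMonoid N] [Module R N] (I : Type*) (φ : M →ₗ[R] N) (x : M ⊗[R] (I → R)) :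
    piScalarRightHom R R N I (rTensor (I → R) φ x) = φ ∘ piScalarRightHom R R M I x := by
  induction x using TensorProduct.induction_on with
  | zero => funext i; simp
  | tmul m f => funext i; simp
  | add a b ha hb => funext i; simp only [map_add, Pi.add_apply, ha, hb, Function.comp_apply]

theorem piScalarRightHom_pi_bijective (ι I : Type*) [Fintype ι] [DecidableEq ι] :
    Function.Bijective (piScalarRightHom R R (ι → R) I) := by
  have h : ⇑(piScalarRightHom R R (ι → R) I) =
      Equiv.piComm _ ∘ piScalarRight R R (I → R) ι ∘ TensorProduct.comm R (ι → R) (I → R) := by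
    ext x i j
    induction x using TensorProduct.induction_on with
    | zero => simp [Equiv.piComm, Function.swap]
    | tmul a f => simp [Equiv.piComm, Function.swap, mul_comm]
    | add a b ha hb => simp_all [Equiv.piComm, Function.swap]
  rw [h]
  exact (Equiv.bijective _).comp ((LinearEquiv.bijective _).comp (LinearEquiv.bijective _))

end TensorProduct

theorem Module.Finite.of_piScalarRightHom_eq_id {R M : Type*} [CommSemiring R] [AddCommMonoid M]
    [Module R M] {x : M ⊗[R] (M → R)} (hx : piScalarRightHom R R M M x = id) :
    Module.Finite R M := by
  classical
  obtain ⟨T, rfl⟩ := TensorProduct.exists_finset x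
  refine ⟨⟨T.image Prod.fst, eq_top_iff.mpr fun m _ => ?_⟩⟩
  have hm : m = ∑ p ∈ T, p.2 m • p.1 := by
    simpa [map_sum] using (congrFun hx m).symm
  rw [hm]
  exact Submodule.sum_mem _ fun p hp =>
    Submodule.smul_mem _ _ (Submodule.subset_span (Finset.mem_image_of_mem _ hp))

theorem Module.FinitePresentation.of_piScalarRightHom_injective {R : Type u} [CommRing R]
    {K : Type v} [AddCommGroup K] [Module R K] [Module.Finite R K]
    (hK : ∀ I : Type u, Function.Injective (piScalarRightHom R R K I)) :
    Module.FinitePresentation R K := by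
  obtain ⟨n, g, hg⟩ := Module.Finite.exists_fin' R K
  set L := ker g
  rw [← Module.FinitePresentation.fg_ker_iff g hg, ← Module.Finite.iff_fg]
  obtain ⟨α, hα⟩ := (piScalarRightHom_pi_bijective (Fin n) L).2 L.subtype
  have hgα : rTensor (L → R) g α = 0 := hK L <| by
    rw [piScalarRightHom_rTensor, hα, map_zero]
    exact funext fun l => l.2
  obtain ⟨γ, rfl⟩ := (rTensor_exact (L → R) (exact_subtype_ker_map g) hg α).mp hgα
  refine Module.Finite.of_piScalarRightHom_eq_id (x := γ) (funext fun l => Subtype.val_injective ?_)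
  simpa [piScalarRightHom_rTensor] using congrFun hα l

theorem twoPresented_of_finitePresentation_ker {R N : Type} [Ring R] [AddCommGroup N]
    [Module R N] {n : ℕ} (f : (Fin n → R) →ₗ[R] N) (hf : Function.Surjective f)
    [Module.FinitePresentation R (ker f)] : TwoPresented R N := by
  obtain ⟨n₁, n₂, g, h, hg, hgh⟩ := Module.FinitePresentation.exists_fin' R (ker f)
  refine ⟨n, n₁, n₂, h, (ker f).subtype ∘ₗ g, f, hf, ?_, ?_⟩
  · exact (Function.Surjective.comp_exact_iff_exact hg).mpr (exact_subtype_ker_map f)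
  · exact (Function.Injective.comp_exact_iff_exact (ker f).injective_subtype).mpr hgh

section Tor

variable {R : Type} [CommRing R]

theorem subsingleton_tor1_of_projective (N Y : ModuleCat.{0} R) [Projective Y] :
    Subsingleton (tor1 N Y) :=
  ModuleCat.subsingleton_of_isZero (isZero_Tor_succ_of_projective _ N Y 0)

theorem injective_lTensor_range_subtype_of_exact {N P₀ P₁ P₂ : Type*}
    [AddCommGroup N] [Module R N] [AddCommGroup P₀] [Module R P₀] [AddCommGroup P₁] [Module R P₁]
    [AddCommGroup P₂] [Module R P₂] (d₁ : P₁ →ₗ[R] P₀) (d₂ : P₂ →ₗ[R] P₁) (hd : d₁ ∘ₗ d₂ = 0)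
    (hex : Function.Exact (lTensor N d₂) (lTensor N d₁)) :
    Function.Injective (lTensor N (range d₁).subtype) := by
  have hd' : d₁.rangeRestrict ∘ₗ d₂ = 0 := by
    ext x
    simpa using LinearMap.congr_fun hd x
  rw [injective_iff_map_eq_zero]
  intro s hs
  obtain ⟨u, rfl⟩ := lTensor_surjective N d₁.surjective_rangeRestrict s
  obtain ⟨v, rfl⟩ := (hex u).mp (by rw [← hs, ← LinearMap.comp_apply, ← lTensor_comp]; rfl)
  rw [← LinearMap.comp_apply, ← lTensor_comp, hd', lTensor_zero, LinearMap.zero_apply]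

/-- `Tor` is derived in its second variable, so `Tor₁(N, Z)` is read off a projective resolution
`⋯ → P₁ → P₀ → Z`; `S` is the image of `P₁`. -/
theorem exists_flat_presentation_of_subsingleton_tor1 (N Z : ModuleCat.{0} R)
    [Subsingleton (tor1 N Z)] :
    ∃ (P : ModuleCat.{0} R) (_ : Module.Flat R P) (S : Submodule R P) (π : P →ₗ[R] Z),
      Function.Surjective π ∧ Function.Exact S.subtype π ∧
      Function.Injective (lTensor N S.subtype) := by
  obtain ⟨Q⟩ := HasProjectiveResolution.out (Z := Z)
  let C := (((MonoidalCategory.tensoringLeft _).obj N).mapHomologicalComplex _).obj Q.complex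
  have hC : C.ExactAt 1 := by
    rw [HomologicalComplex.exactAt_iff_isZero_homology]
    exact (ModuleCat.isZero_of_subsingleton (tor1 N Z)).of_iso (Q.isoLeftDerivedObj _ 1).symm
  have hC' := (C.exactAt_iff' 2 1 0 (by simp) (by simp)).mp hC
  rw [ShortComplex.moduleCat_exact_iff_range_eq_ker] at hC'
  have hQ := ShortComplex.exact_of_g_is_cokernel
    (ShortComplex.mk _ _ Q.complex_d_comp_π_f_zero) Q.isColimitCokernelCofork
  rw [ShortComplex.moduleCat_exact_iff_range_eq_ker] at hQ
  have : Module.Projective R (Q.complex.X 0) :=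
    (IsProjective.iff_projective _).mpr (Q.projective 0)
  refine ⟨Q.complex.X 0, inferInstance, range (Q.complex.d 1 0).hom, (Q.π.f 0).hom,
    (ModuleCat.epi_iff_surjective _).mp inferInstance, ?_, ?_⟩
  · intro y
    refine (SetLike.ext_iff.mp hQ y).symm.trans ?_
    simp
  · refine injective_lTensor_range_subtype_of_exact _ (Q.complex.d 2 1).hom ?_ ?_
    · rw [← ModuleCat.hom_comp, Q.complex.d_comp_d, ModuleCat.hom_zero]
    · rw [LinearMap.exact_iff]
      exact hC'.symm

/-- The diagram chase behind the balance of `Tor₁`: vanishing computed from a resolution of `Z`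
gives vanishing computed from a resolution of `N`. -/
theorem rTensor_injective_of_lTensor_injective {K F N P Z : Type*}
    [AddCommGroup K] [Module R K] [AddCommGroup F] [Module R F] [AddCommGroup N] [Module R N]
    [AddCommGroup P] [Module R P] [AddCommGroup Z] [Module R Z] [Module.Flat R P]
    {i : K →ₗ[R] F} {q : F →ₗ[R] N} (hi : Function.Injective i) (hq : Function.Surjective q)
    (hiq : Function.Exact i q) {S : Submodule R P} {π : P →ₗ[R] Z} (hπ : Function.Surjective π)
    (hSπ : Function.Exact S.subtype π) (hN : Function.Injective (lTensor N S.subtype)) :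
    Function.Injective (rTensor Z i) := by
  rw [injective_iff_map_eq_zero]
  intro x hx
  obtain ⟨y, rfl⟩ := lTensor_surjective K hπ x
  obtain ⟨s, hs⟩ := (lTensor_exact F hSπ hπ (rTensor P i y)).mp <| by
    rw [← LinearMap.comp_apply, lTensor_comp_rTensor, ← rTensor_comp_lTensor,
      LinearMap.comp_apply, hx]
  have hqs : rTensor S q s = 0 := hN <| by
    rw [← LinearMap.comp_apply, lTensor_comp_rTensor, ← rTensor_comp_lTensor,
      LinearMap.comp_apply, hs, ← LinearMap.comp_apply, ← rTensor_comp,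
      hiq.linearMap_comp_eq_zero, rTensor_zero, LinearMap.zero_apply, map_zero]
  obtain ⟨t, rfl⟩ := (rTensor_exact S hiq hq s).mp hqs
  obtain rfl : y = lTensor K S.subtype t :=
    Module.Flat.rTensor_preserves_injective_linearMap i hi <| by
      rw [← hs, ← LinearMap.comp_apply, lTensor_comp_rTensor, ← LinearMap.comp_apply,
        rTensor_comp_lTensor]
  rw [← LinearMap.comp_apply, ← lTensor_comp, hSπ.linearMap_comp_eq_zero, lTensor_zero,
    LinearMap.zero_apply]

theorem rTensor_injective_of_subsingleton_tor1 {K F : Type*} [AddCommGroup K] [Module R K]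
    [AddCommGroup F] [Module R F] {N Z : ModuleCat.{0} R} [Subsingleton (tor1 N Z)]
    {i : K →ₗ[R] F} {q : F →ₗ[R] N} (hi : Function.Injective i) (hq : Function.Surjective q)
    (hiq : Function.Exact i q) : Function.Injective (rTensor Z i) := by
  obtain ⟨P, _, S, π, hπ, hSπ, hN⟩ := exists_flat_presentation_of_subsingleton_tor1 N Z
  exact rTensor_injective_of_lTensor_injective hi hq hiq hπ hSπ hN

theorem piScalarRightHom_ker_injective {N : ModuleCat.{0} R} {n : ℕ}
    (f : (Fin n → R) →ₗ[R] N) (hf : Function.Surjective f) (I : Type)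
    [Subsingleton (tor1 N (ModuleCat.of R (I → R)))] :
    Function.Injective (piScalarRightHom R R (ker f) I) := by
  have hK : Function.Injective (rTensor (I → R) (ker f).subtype) :=
    rTensor_injective_of_subsingleton_tor1 (Z := ModuleCat.of R (I → R))
      (ker f).injective_subtype hf (exact_subtype_ker_map f)
  have hcomp : Function.Injective fun x => (ker f).subtype ∘ piScalarRightHom R R (ker f) I x := by
    simp_rw [← piScalarRightHom_rTensor]
    exact (piScalarRightHom_pi_bijective (Fin n) I).1.comp hK
  exact fun a b hab => hcomp (congrArg _ hab)

end Tor

theorem stmt11 (R : Type) [CommRing R] (𝓝 : ModuleCat.{0} R → Prop)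
    (hfp : ∀ N : ModuleCat.{0} R, 𝓝 N → Module.FinitePresentation R N)
    (H : ∀ (ι : Type) (Z : ι → Type) [∀ i, AddCommGroup (Z i)] [∀ i, Module R (Z i)],
      (∀ N : ModuleCat.{0} R, 𝓝 N → ∀ i, Subsingleton (tor1 N (ModuleCat.of R (Z i)))) →
      ∀ N : ModuleCat.{0} R, 𝓝 N → Subsingleton (tor1 N (ModuleCat.of R (∀ i, Z i)))) :
    ∀ N : ModuleCat.{0} R, 𝓝 N → TwoPresented R N := by
  intro N hN
  have := hfp N hN
  obtain ⟨n, f, hf⟩ := Module.Finite.exists_fin' R N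
  have : Module.Finite R (ker f) :=
    Module.Finite.iff_fg.mpr (Module.FinitePresentation.fg_ker f hf)
  have hTor (I : Type) : Subsingleton (tor1 N (ModuleCat.of R (I → R))) :=
    H I (fun _ => R) (fun N' _ _ => subsingleton_tor1_of_projective N' _) N hN
  have : Module.FinitePresentation R (ker f) :=
    .of_piScalarRightHom_injective fun I => piScalarRightHom_ker_injective f hf I
  exact twoPresented_of_finitePresentation_ker f hf
end

section
/- Let R be a ring. Every right R-module X satisfies Ext¹_R(S, X) = 0 for all simple right R-modules S (i.e., every module is absolutely neat) if and only if R is semisimple. -/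
/-!
A module `S` with `Ext¹(S, -) = 0` is projective: for a projective resolution
`P₁ → P₀ → S`, the corestriction `P₁ → K` of the differential to its image `K` is a 1-cocycle
of `Hom(P, K)`, so it extends to `ψ : P₀ → K`. Then `ψ` retracts `K ↪ P₀`, and `S ≅ P₀ ⧸ K` is a
direct summand of `P₀`.

If every simple module is projective, every maximal right ideal `m` is a direct summand of `R`,
with complement `c ≅ R ⧸ m` simple. Were the socle of `R` proper, it would lie in some such `m`,
hence so would `c`, which is absurd. Conversely, over a semisimple ring every module is projective,
so all `Ext¹` vanish.
-/

open CategoryTheory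

theorem CategoryTheory.ProjectiveResolution.exists_d_comp_eq_of_isZero_ext_one
    {C : Type*} [Category C] [Abelian C] [EnoughProjectives C] {A : Type*} [Ring A] [Linear A C]
    {X Y : C} (P : ProjectiveResolution X) (h : Limits.IsZero (((Ext A C 1).obj (.op X)).obj Y))
    (φ : P.complex.X 1 ⟶ Y) (hφ : P.complex.d 2 1 ≫ φ = 0) :
    ∃ ψ : P.complex.X 0 ⟶ Y, P.complex.d 1 0 ≫ ψ = φ := by
  have hexact : (P.complex.linearYonedaObj A Y).ExactAt 1 :=
    (HomologicalComplex.exactAt_iff_isZero_homology _ _).2 (h.of_iso (P.isoExt 1 Y).symm)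
  rw [HomologicalComplex.exactAt_iff' _ 0 1 2 (by simp) (by simp),
    ShortComplex.moduleCat_exact_iff] at hexact
  exact hexact φ hφ

section Module

variable {R M : Type*} [Ring R] [AddCommGroup M] [Module R M]

theorem Module.Projective.quotient_of_isCompl [Module.Projective R M] {p q : Submodule R M}
    (h : IsCompl p q) : Module.Projective R (M ⧸ p) :=
  .of_split (q.subtype ∘ₗ (p.quotientEquivOfIsCompl q h).toLinearMap) p.mkQ <| by
    ext x
    exact Submodule.mk_quotientEquivOfIsCompl_apply h _

theorem Submodule.isComplemented_of_projective_quotient (p : Submodule R M)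
    [Module.Projective R (M ⧸ p)] : IsComplemented p := by
  obtain ⟨s, hs⟩ := p.mkQ.exists_rightInverse_of_surjective p.range_mkQ
  have hmem (x : M) : x - s (p.mkQ x) ∈ p := by
    rw [← Submodule.Quotient.mk_eq_zero, ← p.mkQ_apply, map_sub,
      ← LinearMap.comp_apply p.mkQ s, hs, LinearMap.id_apply, sub_self]
  let proj : M →ₗ[R] p := (LinearMap.id - s ∘ₗ p.mkQ).codRestrict p hmem
  refine ⟨LinearMap.ker proj, LinearMap.isCompl_of_proj fun x ↦ ?_⟩
  ext
  simp [proj, (Submodule.Quotient.mk_eq_zero p).2 x.2]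

theorem IsSemisimpleRing.of_forall_isCoatom_isComplemented
    (h : ∀ m : Submodule R R, IsCoatom m → IsComplemented m) : IsSemisimpleRing R := by
  refine IsSemisimpleModule.of_sSup_simples_eq_top (by_contra fun hsocle ↦ ?_)
  obtain ⟨m, hm, hsocle_le⟩ := (eq_top_or_exists_le_coatom _).resolve_left hsocle
  obtain ⟨c, hc⟩ := h m hm
  have : IsSimpleModule R (R ⧸ m) := isSimpleModule_iff_isCoatom.2 hm
  have hc_simple : IsSimpleModule R c := .congr (m.quotientEquivOfIsCompl c hc).symm
  have hc_le : c ≤ m :=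
    (le_sSup (show c ∈ {p : Submodule R R | IsSimpleModule R p} from hc_simple)).trans hsocle_le
  exact (isSimpleModule_iff_isAtom.1 hc_simple).1 (hc.disjoint.eq_bot_of_ge hc_le)

end Module

theorem ModuleCat.projective_of_forall_subsingleton_ext1 {R : Type} [Ring R]
    (S : ModuleCat.{0} R) (h : ∀ X : ModuleCat.{0} R, Subsingleton (ext1 S X)) :
    Module.Projective R S := by
  let P := ProjectiveResolution.of S
  let d := P.complex.d 1 0
  let K := LinearMap.range d.hom
  have : Subsingleton (ext1 S (.of R K)) := h _
  have hext : Limits.IsZero (ext1 S (.of R K)) := ModuleCat.isZero_of_subsingleton _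
  obtain ⟨ψ, hψ⟩ := P.exists_d_comp_eq_of_isZero_ext_one hext (ofHom d.hom.rangeRestrict) <| by
    ext x
    exact ConcreteCategory.congr_hom (P.complex.d_comp_d 2 1 0) x
  have hretract (x : K) : ψ x = x := by
    obtain ⟨_, y, rfl⟩ := x
    exact ConcreteCategory.congr_hom hψ y
  have hK : K = LinearMap.ker (P.π.f 0).hom :=
    (ShortComplex.moduleCat_exact_iff_range_eq_ker _).1 P.exact₀
  have : Module.Projective R (P.complex.X 0) := (IsProjective.iff_projective _).2 (P.projective 0)
  have hquot := Module.Projective.quotient_of_isCompl (LinearMap.isCompl_of_proj hretract)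
  rw [hK] at hquot
  exact .of_equiv (LinearMap.quotKerEquivOfSurjective (P.π.f 0).hom
    ((ModuleCat.epi_iff_surjective (P.π.f 0)).1 inferInstance))

theorem stmt14 (R : Type) [Ring R] :
    (∀ X : ModuleCat.{0} R, ∀ S : ModuleCat.{0} R, IsSimpleModule R S →
      Subsingleton (ext1 S X)) ↔ IsSemisimpleRing R := by
  constructor
  · intro h
    refine IsSemisimpleRing.of_forall_isCoatom_isComplemented fun m hm ↦ ?_
    have : Module.Projective R (R ⧸ m) :=
      ModuleCat.projective_of_forall_subsingleton_ext1 (.of R (R ⧸ m))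
        fun X ↦ h X _ (isSimpleModule_iff_isCoatom.2 hm)
    exact m.isComplemented_of_projective_quotient
  · intro _ X S _
    have : Projective S :=
      (IsProjective.iff_projective S).1 (Module.projective_of_isSemisimpleRing R S)
    exact ModuleCat.subsingleton_of_isZero (isZero_Ext_succ_of_projective S X 0)
end

section
/- Let R be a ring. Every right R-module Z satisfies Ext¹_R(Z, S) = 0 for all simple right R-modules S (i.e., every right R-module is coneat-flat) if and only if every simple right R-module is injective (R is a right V-ring). -/
open CategoryTheory

/-!
By a projective resolution `P₁ → P₀ → Z`, `Ext¹(Z, S) = 0` exactly when every linear map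
`K → S` on `K = ker (P₀ → Z)` extends to `P₀`; an injective `S` has this property for all `Z`.
Conversely, by Baer's criterion it suffices to extend a map `g : I → S` from an ideal. Take
`Z = R ⧸ I` and lift `P₀ → R ⧸ I` to `φ : P₀ → R`. Then `φ` maps `K` into `I`, so `g ∘ φ`
extends to `P₀`, and since `R` is the pushout of `P₀ ← K → I` this extension glues with `g`.
-/

universe u v

namespace Submodule

def ExtendsInto {R M : Type*} [Ring R] [AddCommGroup M] [Module R M] (K : Submodule R M)
    (S : Type*) [AddCommGroup S] [Module R S] : Prop :=
  ∀ g : K →ₗ[R] S, ∃ h : M →ₗ[R] S, h ∘ₗ K.subtype = g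

theorem extendsInto_of_injective {R : Type u} {M : Type*} {S : Type v} [Ring R] [Small.{v} R]
    [AddCommGroup M] [Module R M] [AddCommGroup S] [Module R S] [Module.Injective R S]
    (K : Submodule R M) : K.ExtendsInto S :=
  Module.Injective.extension_property R S K M K.subtype K.injective_subtype

end Submodule

section Factorization

variable {R M N S : Type*} [Ring R] [AddCommGroup M] [Module R M] [AddCommGroup N] [Module R N]
  [AddCommGroup S] [Module R S]

theorem LinearMap.exists_comp_eq_of_ker_le {f : M →ₗ[R] N} (hf : Function.Surjective f)
    {g : M →ₗ[R] S} (h : LinearMap.ker f ≤ LinearMap.ker g) : ∃ g' : N →ₗ[R] S, g' ∘ₗ f = g :=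
  ⟨(LinearMap.ker f).liftQ g h ∘ₗ (f.quotKerEquivOfSurjective hf).symm.toLinearMap, by
    ext x
    simp⟩

theorem LinearMap.range_extendsInto_iff {L : Type*} [AddCommGroup L] [Module R L]
    (d₂ : L →ₗ[R] M) (d₁ : M →ₗ[R] N) (h : LinearMap.range d₂ = LinearMap.ker d₁) :
    (LinearMap.range d₁).ExtendsInto S ↔
      ∀ f : M →ₗ[R] S, f ∘ₗ d₂ = 0 → ∃ g : N →ₗ[R] S, g ∘ₗ d₁ = f := by
  constructor
  · intro hext f hf
    have hker : LinearMap.ker d₁.rangeRestrict ≤ LinearMap.ker f := by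
      rw [LinearMap.ker_rangeRestrict, ← h, LinearMap.range_le_ker_iff]
      exact hf
    obtain ⟨f₀, rfl⟩ := LinearMap.exists_comp_eq_of_ker_le d₁.surjective_rangeRestrict hker
    obtain ⟨g, rfl⟩ := hext f₀
    exact ⟨g, rfl⟩
  · intro hlift f₀
    have hd : d₁ ∘ₗ d₂ = 0 := LinearMap.range_le_ker_iff.1 h.le
    obtain ⟨g, hg⟩ := hlift (f₀ ∘ₗ d₁.rangeRestrict) (LinearMap.ext fun x ↦ by
      simpa using congr_arg f₀ (Subtype.ext (LinearMap.congr_fun hd x) :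
        d₁.rangeRestrict (d₂ x) = 0))
    refine ⟨g, (LinearMap.cancel_right d₁.surjective_rangeRestrict).1 ?_⟩
    rw [LinearMap.comp_assoc, ← hg]
    rfl

theorem Submodule.extendsInto_of_ker_extendsInto {Y P : Type*} [AddCommGroup Y] [Module R Y]
    [AddCommGroup P] [Module R P] [Module.Projective R P] {N : Submodule R Y}
    {ε : P →ₗ[R] Y ⧸ N} (hε : Function.Surjective ε) (h : (LinearMap.ker ε).ExtendsInto S) :
    N.ExtendsInto S := by
  intro g
  obtain ⟨φ, hφ⟩ := Module.projective_lifting_property N.mkQ ε N.mkQ_surjective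
  have hφN : ∀ k : LinearMap.ker ε, φ k ∈ N := fun k ↦ by
    rw [← Submodule.Quotient.mk_eq_zero, ← N.mkQ_apply, ← LinearMap.comp_apply, hφ]
    exact k.2
  obtain ⟨h₀, hh₀⟩ := h (g ∘ₗ LinearMap.codRestrict N (φ ∘ₗ (LinearMap.ker ε).subtype) hφN)
  -- `(p, n) ↦ φ p + n` exhibits `Y` as the pushout of `P ← ker ε → N`.
  have hsurj : Function.Surjective (φ.coprod N.subtype) := by
    intro y
    obtain ⟨p, hp⟩ := hε (N.mkQ y)
    have hy : y - φ p ∈ N := by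
      rw [← Submodule.Quotient.mk_eq_zero, Submodule.Quotient.mk_sub, ← N.mkQ_apply,
        ← N.mkQ_apply, ← LinearMap.comp_apply N.mkQ, hφ, hp, sub_self]
    exact ⟨(p, ⟨_, hy⟩), by simp⟩
  have hker : LinearMap.ker (φ.coprod N.subtype) ≤ LinearMap.ker (h₀.coprod g) := by
    rintro ⟨p, n⟩ hpn
    have hφp : φ p = -n := eq_neg_of_add_eq_zero_left hpn
    have hp : p ∈ LinearMap.ker ε := by
      rw [LinearMap.mem_ker, ← hφ, LinearMap.comp_apply, N.mkQ_apply, hφp,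
        Submodule.Quotient.mk_eq_zero]
      exact N.neg_mem n.2
    have hh₀p : h₀ p = g (-n) := by
      have hn : (⟨φ p, hφN ⟨p, hp⟩⟩ : N) = -n := Subtype.ext hφp
      rw [← hn]
      exact LinearMap.congr_fun hh₀ ⟨p, hp⟩
    simp [hh₀p]
  obtain ⟨g', hg'⟩ := LinearMap.exists_comp_eq_of_ker_le hsurj hker
  refine ⟨g', LinearMap.ext fun n ↦ ?_⟩
  simpa using LinearMap.congr_fun hg' (0, n)

end Factorization

theorem CategoryTheory.ProjectiveResolution.subsingleton_ext1_iff {R : Type} [Ring R]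
    {Z : ModuleCat.{0} R} (P : ProjectiveResolution Z) (S : ModuleCat.{0} R) :
    Subsingleton (ext1 Z S) ↔ (LinearMap.range (P.complex.d 1 0).hom).ExtendsInto S := by
  rw [← ModuleCat.isZero_iff_subsingleton, (P.isoExt 1 S).isZero_iff,
    ← HomologicalComplex.exactAt_iff_isZero_homology,
    (P.complex.linearYonedaObj ℤ S).exactAt_iff' 0 1 2 (by simp) (by simp),
    ShortComplex.moduleCat_exact_iff, LinearMap.range_extendsInto_iff _ _
      ((ShortComplex.moduleCat_exact_iff_range_eq_ker _).1 (P.exact_succ 0))]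
  refine ModuleCat.homEquiv.forall_congr fun f ↦ ?_
  refine imp_congr ?_ (ModuleCat.homEquiv.exists_congr fun g ↦ ?_)
  · exact ModuleCat.hom_ext_iff (f := P.complex.d 2 1 ≫ f) (g := 0)
  · exact ModuleCat.hom_ext_iff

theorem injective_iff_forall_subsingleton_ext1 {R : Type} [Ring R] (S : ModuleCat.{0} R) :
    Module.Injective R S ↔ ∀ Z : ModuleCat.{0} R, Subsingleton (ext1 Z S) := by
  refine ⟨fun _ Z ↦ ?_, fun h ↦ Module.Baer.injective fun I g ↦ ?_⟩
  · obtain ⟨P⟩ : Nonempty (ProjectiveResolution Z) := HasProjectiveResolution.out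
    exact (P.subsingleton_ext1_iff S).2 (Submodule.extendsInto_of_injective _)
  · obtain ⟨P⟩ : Nonempty (ProjectiveResolution (ModuleCat.of R (R ⧸ I))) :=
      HasProjectiveResolution.out
    have hK := (P.subsingleton_ext1_iff S).1 (h _)
    rw [(ShortComplex.moduleCat_exact_iff_range_eq_ker _).1 P.exact₀] at hK
    obtain ⟨g', hg'⟩ := Submodule.extendsInto_of_ker_extendsInto
      ((ModuleCat.epi_iff_surjective _).1 inferInstance) hK g
    exact ⟨g', fun x hx ↦ LinearMap.congr_fun hg' ⟨x, hx⟩⟩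

theorem stmt15 (R : Type) [Ring R] :
    (∀ Z : ModuleCat.{0} R, ∀ S : ModuleCat.{0} R, IsSimpleModule R S →
      Subsingleton (ext1 Z S)) ↔
    (∀ S : ModuleCat.{0} R, IsSimpleModule R S → Module.Injective R S) := by
  simp only [injective_iff_forall_subsingleton_ext1]
  exact ⟨fun h S hS Z ↦ h Z S hS, fun h Z S hS ↦ h S hS Z⟩
end

section
/- Let R be a ring. The following are equivalent: (i) every simple right R-module embeds into R (R is right Kasch); (ii) for every injective right R-module X and every simple right R-module S, every homomorphism S → X factors through a projective right R-module; (iii) for each simple right R-module S, the inclusion of S into its injective envelope factors through a projective module. -/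
/-!
If `S` embeds into `R`, injectivity of `X` extends any `f : S → X` along that embedding, so `f`
factors through the projective module `R`. Conversely, if the embedding of `S` into an injective
module factors as `S → P → E` with `P` projective, then `S → P` is nonzero, some functional
`P → R` does not vanish on its image, and the composite `S → R` is injective because `S` is
simple.
-/

open CategoryTheory

theorem IsSimpleModule.exists_injective_toRing_of_ne_zero {R S P : Type*} [Ring R]
    [AddCommGroup S] [Module R S] [IsSimpleModule R S] [AddCommGroup P] [Module R P]
    [Module.Projective R P] {α : S →ₗ[R] P} (hα : α ≠ 0) :
    ∃ ι : S →ₗ[R] R, Function.Injective ι := by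
  obtain ⟨x, hx⟩ : ∃ x, α x ≠ 0 := by
    by_contra! h
    exact hα (LinearMap.ext h)
  obtain ⟨φ, hφ⟩ := Module.Projective.exists_dual_ne_zero R hx
  have hφα : φ ∘ₗ α ≠ 0 := fun h ↦ hφ (LinearMap.congr_fun h x)
  exact ⟨φ ∘ₗ α, LinearMap.injective_of_ne_zero hφα⟩

universe v

theorem ModuleCat.exists_injective_embedding {R : Type*} [Ring R] [Small.{v} R]
    (M : ModuleCat.{v} R) :
    ∃ E : ModuleCat.{v} R, Module.Injective R E ∧ ∃ ι : M →ₗ[R] E, Function.Injective ι :=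
  ⟨Injective.under M,
    (Module.injective_iff_injective_object R _).mpr
      (inferInstanceAs (CategoryTheory.Injective (Injective.under M))),
    (Injective.ι M).hom, (ModuleCat.mono_iff_injective _).mp inferInstance⟩

theorem stmt18 (R : Type) [Ring R] :
    List.TFAE
      [∀ S : ModuleCat.{0} R, IsSimpleModule R S →
          ∃ ι : S →ₗ[R] R, Function.Injective ι,
       ∀ X : ModuleCat.{0} R, Module.Injective R X →
          ∀ S : ModuleCat.{0} R, IsSimpleModule R S →
            ∀ f : S →ₗ[R] X, FactorsThroughProjective f,
       ∀ S : ModuleCat.{0} R, IsSimpleModule R S →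
          ∀ E : ModuleCat.{0} R, Module.Injective R E →
            ∀ ι : S →ₗ[R] E, Function.Injective ι → FactorsThroughProjective ι] := by
  tfae_have 1 → 2
  | kasch, X, hX, S, hS, f => by
    obtain ⟨ι, hι⟩ := kasch S hS
    obtain ⟨β, hβ⟩ := hX.out ι hι f
    exact ⟨ModuleCat.of R R, inferInstanceAs (Module.Projective R R), ι, β, LinearMap.ext hβ⟩
  tfae_have 2 → 3
  | factors, S, hS, E, hE, ι, _ => factors E hE S hS ι
  tfae_have 3 → 1
  | factors, S, hS => by
    obtain ⟨E, hE, ι, hι⟩ := S.exists_injective_embedding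
    obtain ⟨P, hP, α, β, hβα⟩ := factors S hS E hE ι hι
    have : Nontrivial S := IsSimpleModule.nontrivial R S
    have hα : α ≠ 0 := fun h ↦ LinearMap.ne_zero_of_injective hι (by simp [← hβα, h])
    exact IsSimpleModule.exists_injective_toRing_of_ne_zero hα
  tfae_finish
end
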